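/- arXiv:1107.4989 — 11 statements merged into one kernel-verified Lean document; each statement's English description precedes it below -/
import Mathlib

section
/- The function f : ℝⁿ → ℝ defined by f(x₁,…,xₙ) = Σᵢ (-1)^(i-1) xᵢ, for odd n ≥ 3, is associative: for each i = 1,…,n-1, f(x₁,…,x_{i-1}, f(x_i,…,x_{i+n-1}), x_{i+n},…,x_{2n-1}) = f(x₁,…,x_i, f(x_{i+1},…,x_{i+n}), x_{i+n+1},…,x_{2n-1}) for all reals. -/
/-!
Both sides equal the alternating sum of all `2n - 1` entries. Substituting the alternating sum
of `x_i, …, x_{i+n-1}` at position `i` contributes exactly the terms with indices in `[i, i+n)`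
with their correct signs, and the trailing entries are shifted by `n - 1`, which is even because
`n` is odd, so their signs are unchanged.
-/

open Finset

variable {R : Type*} [CommRing R]

def altSum (n : ℕ) (x : ℕ → R) : R :=
  ∑ j ∈ range n, (-1) ^ j * x j

theorem altSum_substitute {n i : ℕ} (hodd : Odd n) (hi : i < n) (x : ℕ → R) :
    altSum n (fun j => if j < i then x j
      else if j = i then altSum n (fun l => x (i + l)) else x (j + n - 1)) =
    altSum (2 * n - 1) x := by
  obtain ⟨m, rfl⟩ : ∃ m, n = i + 1 + m := ⟨n - (i + 1), by omega⟩
  generalize hy : altSum (i + 1 + m) (fun l => x (i + l)) = y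
  rw [altSum, altSum, show 2 * (i + 1 + m) - 1 = i + (i + 1 + m) + m by omega,
    sum_range_add _ (i + 1) m, sum_range_succ, sum_range_add _ (i + (i + 1 + m)) m,
    sum_range_add _ i (i + 1 + m)]
  have hhead : ∀ j ∈ range i, (-1 : R) ^ j *
      (if j < i then x j else if j = i then y else x (j + (i + 1 + m) - 1)) = (-1) ^ j * x j :=
    fun j hj => by rw [if_pos (mem_range.mp hj)]
  have hmid : (-1 : R) ^ i * y = ∑ l ∈ range (i + 1 + m), (-1) ^ (i + l) * x (i + l) := by
    simp only [← hy, altSum, mul_sum, pow_add, mul_assoc]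
  have htail : ∀ k ∈ range m, (-1 : R) ^ (i + 1 + k) *
      (if i + 1 + k < i then x (i + 1 + k) else if i + 1 + k = i then y
        else x (i + 1 + k + (i + 1 + m) - 1)) =
      (-1) ^ (i + (i + 1 + m) + k) * x (i + (i + 1 + m) + k) := fun k _ => by
    rw [if_neg (by omega), if_neg (by omega),
      show i + 1 + k + (i + 1 + m) - 1 = i + (i + 1 + m) + k by omega,
      pow_add (-1 : R) (i + (i + 1 + m)), pow_add (-1 : R) i, hodd.neg_one_pow]
    ring
  rw [sum_congr rfl hhead, sum_congr rfl htail, if_neg (lt_irrefl i), if_pos rfl, hmid]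

theorem stmt_0_general (n : ℕ) (hodd : Odd n)
    (f : (Fin n → ℝ) → ℝ)
    (hf : ∀ x : Fin n → ℝ, f x = ∑ i : Fin n, (-1 : ℝ) ^ (i : ℕ) * x i) :
    ∀ x : ℕ → ℝ, ∀ i : ℕ, i + 1 < n →
      f (fun j : Fin n => if (j : ℕ) < i then x j
          else if (j : ℕ) = i then f (fun l : Fin n => x (i + (l : ℕ)))
          else x ((j : ℕ) + n - 1)) =
      f (fun j : Fin n => if (j : ℕ) < i + 1 then x j
          else if (j : ℕ) = i + 1 then f (fun l : Fin n => x (i + 1 + (l : ℕ)))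
          else x ((j : ℕ) + n - 1)) := by
  intro x i hi
  have hsubst : ∀ k < n, f (fun j : Fin n => if (j : ℕ) < k then x j
      else if (j : ℕ) = k then f (fun l : Fin n => x (k + (l : ℕ))) else x ((j : ℕ) + n - 1)) =
      altSum (2 * n - 1) x := fun k hk => by
    rw [← altSum_substitute hodd hk x]
    simp only [hf, altSum, sum_range]
  rw [hsubst i (by omega), hsubst (i + 1) hi]

/-- For odd `n ≥ 3`, the alternating sum `f(x₁,…,xₙ) = ∑ (-1)^(i-1) xᵢ` on `ℝⁿ` is
associative: substituting `f` at consecutive position `i` or `i+1` of a `(2n-1)`-tuple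
gives the same result, for each `i = 1, …, n-1`. -/
theorem stmt_0 (n : ℕ) (hn : 3 ≤ n) (hodd : Odd n)
    (f : (Fin n → ℝ) → ℝ)
    (hf : ∀ x : Fin n → ℝ, f x = ∑ i : Fin n, (-1 : ℝ) ^ (i : ℕ) * x i) :
    ∀ x : ℕ → ℝ, ∀ i : ℕ, i + 1 < n →
      f (fun j : Fin n => if (j : ℕ) < i then x j
          else if (j : ℕ) = i then f (fun l : Fin n => x (i + (l : ℕ)))
          else x ((j : ℕ) + n - 1)) =
      f (fun j : Fin n => if (j : ℕ) < i + 1 then x j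
          else if (j : ℕ) = i + 1 then f (fun l : Fin n => x (i + 1 + (l : ℕ)))
          else x ((j : ℕ) + n - 1)) :=
  stmt_0_general n hodd f hf
end

section
/- Let I be a nontrivial real interval and f : Iⁿ → I continuous, symmetric, cancellative, and associative. Then f is strictly increasing in each variable. -/
/-!
Continuity and cancellativity make each partial map `t ↦ f (…, t, …)` strictly monotone, in a
direction that, by connectedness of the space of base points, does not depend on the other
arguments, and by symmetry does not depend on the coordinate either. If it were decreasing,
`t ↦ f (f (t, c, …, c), c, …, c)` would be increasing as a composite of two decreasing maps, while
associativity rewrites it as `t ↦ f (t, f (c, …, c), c, …, c)`, which is decreasing.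
-/

/-- `f : Iⁿ → I` is associative in the `n`-ary sense: for each `i` with `i+1 < n`,
substituting `f` into positions `i` or `i+1` of a `(2n-1)`-tuple over `I` gives
the same result. -/
def NAssocOn (n : ℕ) (I : Set ℝ) (f : (Fin n → ℝ) → ℝ) : Prop :=
  ∀ x : ℕ → ℝ, (∀ j, j < 2 * n - 1 → x j ∈ I) → ∀ i : ℕ, i + 1 < n →
    f (fun j : Fin n => if (j : ℕ) < i then x j
        else if (j : ℕ) = i then f (fun l : Fin n => x (i + (l : ℕ)))
        else x ((j : ℕ) + n - 1)) =
    f (fun j : Fin n => if (j : ℕ) < i + 1 then x j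
        else if (j : ℕ) = i + 1 then f (fun l : Fin n => x (i + 1 + (l : ℕ)))
        else x ((j : ℕ) + n - 1))

/-- `f` is symmetric on `Iⁿ`: invariant under all permutations of its arguments. -/
def SymmOn (n : ℕ) (I : Set ℝ) (f : (Fin n → ℝ) → ℝ) : Prop :=
  ∀ x : Fin n → ℝ, (∀ i, x i ∈ I) → ∀ σ : Equiv.Perm (Fin n), f (x ∘ σ) = f x

/-- `f` is cancellative on `Iⁿ`: one-to-one in each variable. -/
def CancOn (n : ℕ) (I : Set ℝ) (f : (Fin n → ℝ) → ℝ) : Prop :=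
  ∀ k : Fin n, ∀ x x' : Fin n → ℝ, (∀ i, x i ∈ I) → (∀ i, x' i ∈ I) →
    (∀ i, i ≠ k → x i = x' i) → f x = f x' → x k = x' k

open Function

section

variable {n : ℕ} {I : Set ℝ} {f : (Fin n → ℝ) → ℝ}

lemma update_mem_of_forall_mem {x : Fin n → ℝ} (hx : ∀ i, x i ∈ I) (k : Fin n) {t : ℝ}
    (ht : t ∈ I) (i : Fin n) : update x k t i ∈ I := by
  rcases eq_or_ne i k with rfl | h
  · simpa
  · simpa [h] using hx i

lemma CancOn.injOn_update (hcanc : CancOn n I f) {x : Fin n → ℝ} (hx : ∀ i, x i ∈ I)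
    (k : Fin n) : Set.InjOn (fun t => f (update x k t)) I := fun a ha b hb hab => by
  simpa using hcanc k _ _ (update_mem_of_forall_mem hx k ha) (update_mem_of_forall_mem hx k hb)
    (fun i hi => by simp [hi]) hab

lemma SymmOn.apply_update_eq_apply_update_comp_swap (hsym : SymmOn n I f) {x : Fin n → ℝ}
    (hx : ∀ i, x i ∈ I) {t : ℝ} (ht : t ∈ I) (k j : Fin n) :
    f (update x k t) = f (update (x ∘ Equiv.swap k j) j t) := by
  rw [← hsym _ (update_mem_of_forall_mem hx k ht) (Equiv.swap k j), update_comp_equiv,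
    Equiv.symm_swap, Equiv.swap_apply_left]

/-- On the convex, hence preconnected, set `Q` of triples `(x, a, b)` with `x ∈ Iⁿ`, `a, b ∈ I` and
`a < b`, cancellativity keeps `f (update x k a)` and `f (update x k b)` apart, so by the
intermediate value theorem the same one of them is the larger throughout `Q`. -/
lemma strictMonoOn_or_strictAntiOn_update (hI : I.OrdConnected)
    (hcont : ContinuousOn f {x | ∀ i, x i ∈ I}) (hcanc : CancOn n I f) (k : Fin n) :
    (∀ x : Fin n → ℝ, (∀ i, x i ∈ I) → StrictMonoOn (fun t => f (update x k t)) I) ∨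
      (∀ x : Fin n → ℝ, (∀ i, x i ∈ I) → StrictAntiOn (fun t => f (update x k t)) I) := by
  set Q : Set ((Fin n → ℝ) × ℝ × ℝ) :=
    Set.univ.pi (fun _ => I) ×ˢ ((I ×ˢ I) ∩ {p | p.1 < p.2})
  have hlt : Convex ℝ {p : ℝ × ℝ | p.1 < p.2} := by
    simpa [Set.preimage, sub_pos] using
      (convex_Ioi (0 : ℝ)).linear_preimage (LinearMap.snd ℝ ℝ ℝ - LinearMap.fst ℝ ℝ ℝ)
  have hQ : IsPreconnected Q :=
    ((convex_pi fun _ _ => hI.convex).prod ((hI.convex.prod hI.convex).inter hlt)).isPreconnected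
  have hQmem : ∀ {x a b}, (∀ i, x i ∈ I) → a ∈ I → b ∈ I → a < b → (x, a, b) ∈ Q :=
    fun hx ha hb hab => ⟨by simpa using hx, ⟨ha, hb⟩, hab⟩
  have hcontQ : ∀ g : (Fin n → ℝ) × ℝ × ℝ → ℝ, Continuous g → (∀ p ∈ Q, g p ∈ I) →
      ContinuousOn (fun p => f (update p.1 k (g p))) Q := fun g hg hgI =>
    hcont.comp (continuous_fst.update k hg).continuousOn
      fun p hp => update_mem_of_forall_mem (by simpa using hp.1) k (hgI p hp)
  by_contra! h
  obtain ⟨⟨x, hx, hx_mono⟩, ⟨y, hy, hy_anti⟩⟩ := h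
  simp only [StrictMonoOn, StrictAntiOn, not_forall, not_lt] at hx_mono hy_anti
  obtain ⟨a, ha, b, hb, hab, hba⟩ := hx_mono
  obtain ⟨c, hc, d, hd, hcd, hdc⟩ := hy_anti
  obtain ⟨p, ⟨hp, ⟨hp₁, hp₂⟩, hp_lt⟩, hp_eq⟩ := hQ.intermediate_value₂ (hQmem hy hc hd hcd)
    (hQmem hx ha hb hab) (hcontQ _ continuous_snd.fst fun p hp => hp.2.1.1)
    (hcontQ _ continuous_snd.snd fun p hp => hp.2.1.2) hdc hba
  exact hp_lt.ne (hcanc.injOn_update (by simpa using hp) k hp₁ hp₂ hp_eq)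

end

section

variable {m : ℕ} {I : Set ℝ} {f : (Fin (m + 2) → ℝ) → ℝ}

lemma NAssocOn.apply_update_const_zero (hassoc : NAssocOn (m + 2) I f) {c t : ℝ} (hc : c ∈ I)
    (ht : t ∈ I) :
    f (update (fun _ => c) 0 (f (update (fun _ => c) 0 t))) =
      f (update (update (fun _ => c) 1 (f fun _ => c)) 0 t) := by
  have key := hassoc (fun j => if j = 0 then t else c) (fun j _ => by split_ifs <;> assumption) 0
    (by omega)
  convert key using 2 <;> funext j
  · rcases eq_or_ne j 0 with rfl | hj
    · simp only [update_self, Fin.val_zero, lt_self_iff_false, if_false, if_true, zero_add]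
      congr 1
      funext l
      simp [update_apply, ← Fin.val_eq_zero_iff]
    · simp [hj]
  · rcases eq_or_ne j 0 with rfl | hj0
    · simp
    rcases eq_or_ne j 1 with rfl | hj1
    · simp
    · have h1 : (j : ℕ) ≠ 1 := fun h => hj1 (Fin.ext (by simpa using h))
      simp [hj0, hj1, h1]

lemma NAssocOn.not_strictAntiOn_update_zero (hassoc : NAssocOn (m + 2) I f)
    (hmap : ∀ x : Fin (m + 2) → ℝ, (∀ i, x i ∈ I) → f x ∈ I) {a b : ℝ} (ha : a ∈ I)
    (hb : b ∈ I) (hab : a < b) :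
    ¬ ∀ x : Fin (m + 2) → ℝ, (∀ i, x i ∈ I) → StrictAntiOn (fun t => f (update x 0 t)) I := by
  intro hanti
  set c : Fin (m + 2) → ℝ := fun _ => a
  have hc : ∀ i, c i ∈ I := fun _ => ha
  have hg : ∀ t ∈ I, f (update c 0 t) ∈ I := fun t ht =>
    hmap _ (update_mem_of_forall_mem hc 0 ht)
  have hg_anti : f (update c 0 b) < f (update c 0 a) := hanti c hc ha hb hab
  have hgg_mono : f (update c 0 (f (update c 0 a))) < f (update c 0 (f (update c 0 b))) :=
    hanti c hc (hg b hb) (hg a ha) hg_anti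
  have hassoc_anti : f (update (update c 1 (f c)) 0 b) < f (update (update c 1 (f c)) 0 a) :=
    hanti _ (update_mem_of_forall_mem hc 1 (hmap c hc)) ha hb hab
  rw [hassoc.apply_update_const_zero ha ha, hassoc.apply_update_const_zero ha hb] at hgg_mono
  exact hgg_mono.asymm hassoc_anti

end

/-- Claim 1: a continuous, symmetric, cancellative, associative `f : Iⁿ → I` on a
nontrivial real interval `I` is strictly increasing in each variable. -/
theorem stmt_3 (n : ℕ) (hn : 2 ≤ n) (I : Set ℝ) (hI : I.OrdConnected)
    (hne : ∃ a ∈ I, ∃ b ∈ I, a ≠ b)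
    (f : (Fin n → ℝ) → ℝ)
    (hmap : ∀ x : Fin n → ℝ, (∀ i, x i ∈ I) → f x ∈ I)
    (hcont : ContinuousOn f {x | ∀ i, x i ∈ I})
    (hsym : SymmOn n I f) (hcanc : CancOn n I f) (hassoc : NAssocOn n I f) :
    ∀ k : Fin n, ∀ x : Fin n → ℝ, (∀ i, x i ∈ I) →
      ∀ a b : ℝ, a ∈ I → b ∈ I → a < b →
        f (Function.update x k a) < f (Function.update x k b) := by
  obtain ⟨m, rfl⟩ := Nat.exists_eq_add_of_le' hn
  obtain ⟨a, ha, b, hb, hab⟩ : ∃ a ∈ I, ∃ b ∈ I, a < b := by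
    obtain ⟨a, ha, b, hb, hab⟩ := hne
    rcases hab.lt_or_gt with h | h
    exacts [⟨a, ha, b, hb, h⟩, ⟨b, hb, a, ha, h⟩]
  have hmono : ∀ y : Fin (m + 2) → ℝ, (∀ i, y i ∈ I) →
      StrictMonoOn (fun t => f (update y 0 t)) I :=
    (strictMonoOn_or_strictAntiOn_update hI hcont hcanc 0).resolve_right
      (hassoc.not_strictAntiOn_update_zero hmap ha hb hab)
  intro k x hx s t hs ht hst
  rw [hsym.apply_update_eq_apply_update_comp_swap hx hs k 0,
    hsym.apply_update_eq_apply_update_comp_swap hx ht k 0]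
  exact hmono _ (fun i => hx _) hs ht hst
end

section
/- Let I be a nontrivial real interval and f : Iⁿ → I continuous, symmetric, cancellative, and associative. Then f has at most one idempotent: if f(d,…,d) = d and f(e,…,e) = e with d, e ∈ I, then d = e. -/
/-!
An idempotent `u` is neutral: associativity rewrites `f (f (t, u, …, u), u, …, u)` as
`f (t, f (u, …, u), u, …, u) = f (t, u, …, u)`, and cancelling the outer `f` gives
`f (t, u, …, u) = t`. Since `f` is cancellative and continuous on the connected set `Iⁿ`,
the sign of `f (…, b, …) - f (…, a, …)` does not depend on the other arguments, and
neutrality of `u` makes it positive for `a < b`; so `f` is monotone. For idempotents `d ≤ e`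
this gives `e = f (e, d, d, …, d) ≤ f (e, d, e, …, e) = d`.
-/

open Function

theorem monotoneOn_of_monotoneOn_update {n : ℕ} {α β : Type*} [Preorder α] [Preorder β]
    {I : Set α} {g : (Fin n → α) → β}
    (hg : ∀ k p, (∀ i, p i ∈ I) → MonotoneOn (fun s => g (update p k s)) I) :
    MonotoneOn g {x | ∀ i, x i ∈ I} := by
  intro x hx y hy hxy
  let z : ℕ → Fin n → α := fun m j => if (j : ℕ) < m then y j else x j
  have hz : ∀ m i, z m i ∈ I := fun m i => by
    dsimp only [z]; split_ifs
    exacts [hy i, hx i]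
  have hstep : ∀ m, g (z m) ≤ g (z (m + 1)) := by
    intro m
    by_cases hm : m < n
    · let k : Fin n := ⟨m, hm⟩
      calc g (z m) = g (update (z (m + 1)) k (x k)) := by
            congr 1; ext j
            rcases eq_or_ne j k with rfl | hj
            · simp [z, k]
            · have hjm : (j : ℕ) ≠ m := fun h => hj (Fin.ext h)
              have hlt : (j : ℕ) < m ↔ (j : ℕ) < m + 1 := by omega
              simp only [z, update_of_ne hj, hlt]
        _ ≤ g (update (z (m + 1)) k (y k)) := hg k _ (hz _) (hx k) (hy k) (hxy k)
        _ = g (z (m + 1)) := by rw [update_eq_self_iff.2]; simp [z, k]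
    · have : z m = z (m + 1) := by
        ext j
        have hlt : (j : ℕ) < m ↔ (j : ℕ) < m + 1 := by omega
        simp only [z, hlt]
      rw [this]
  have hmono := monotone_nat_of_le_succ hstep (Nat.zero_le n)
  have h0 : z 0 = x := by ext j; simp [z]
  have hn : z n = y := by ext j; simp [z]
  simpa only [h0, hn] using hmono

theorem update_mem_of_forall_mem_s4 {ι α : Type*} [DecidableEq ι] {I : Set α} {p : ι → α}
    (hp : ∀ i, p i ∈ I) (k : ι) {a : α} (ha : a ∈ I) : ∀ i, update p k a i ∈ I := by
  intro i
  rcases eq_or_ne i k with rfl | hi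
  · simpa using ha
  · simpa [hi] using hp i

section
variable {n : ℕ} {I : Set ℝ} {f : (Fin n → ℝ) → ℝ}

theorem NAssocOn.apply_update_const_zero_s4 (hn : 2 ≤ n)
    (hmap : ∀ x : Fin n → ℝ, (∀ i, x i ∈ I) → f x ∈ I)
    (hcanc : CancOn n I f) (hassoc : NAssocOn n I f) {u t : ℝ} (hu : u ∈ I)
    (hidem : f (fun _ => u) = u) (ht : t ∈ I) :
    f (update (fun _ => u) ⟨0, by omega⟩ t) = t := by
  set k : Fin n := ⟨0, by omega⟩
  have hmem : ∀ {s}, s ∈ I → ∀ i, update (fun _ => u) k s i ∈ I :=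
    fun hs => update_mem_of_forall_mem_s4 (fun _ => hu) k hs
  let x : ℕ → ℝ := fun m => if m = 0 then t else u
  have H := hassoc x (fun m _ => by dsimp only [x]; split_ifs; exacts [ht, hu]) 0 hn
  have hx : (fun l : Fin n => x (0 + (l : ℕ))) = update (fun _ => u) k t := by
    ext l; simp [x, update_apply, k, Fin.ext_iff]
  have hx1 : (fun l : Fin n => x (0 + 1 + (l : ℕ))) = fun _ => u := by
    ext l; simp [x]
  rw [hx, hx1, hidem] at H
  have hL : (fun j : Fin n => if (j : ℕ) < 0 then x j
      else if (j : ℕ) = 0 then f (update (fun _ => u) k t) else x ((j : ℕ) + n - 1))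
      = update (fun _ => u) k (f (update (fun _ => u) k t)) := by
    ext j; have : (j : ℕ) + n - 1 ≠ 0 := by omega
    by_cases hj : (j : ℕ) = 0 <;> simp [x, update_apply, k, Fin.ext_iff, hj, this]
  have hR : (fun j : Fin n => if (j : ℕ) < 0 + 1 then x j
      else if (j : ℕ) = 0 + 1 then u else x ((j : ℕ) + n - 1))
      = update (fun _ => u) k t := by
    ext j; have : (j : ℕ) + n - 1 ≠ 0 := by omega
    by_cases hj : (j : ℕ) = 0 <;> simp [x, update_apply, k, Fin.ext_iff, hj, this]
  rw [hL, hR] at H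
  simpa using hcanc k _ _ (hmem (hmap _ (hmem ht))) (hmem ht) (fun i hi => by simp [hi]) H

theorem NAssocOn.apply_update_const (hn : 2 ≤ n)
    (hmap : ∀ x : Fin n → ℝ, (∀ i, x i ∈ I) → f x ∈ I) (hsym : SymmOn n I f)
    (hcanc : CancOn n I f) (hassoc : NAssocOn n I f) {u t : ℝ} (hu : u ∈ I)
    (hidem : f (fun _ => u) = u) (ht : t ∈ I) (k : Fin n) :
    f (update (fun _ => u) k t) = t := by
  rw [← hsym _ (update_mem_of_forall_mem_s4 (fun _ => hu) k ht) (Equiv.swap ⟨0, by omega⟩ k),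
    update_comp_equiv]
  simpa [comp_def] using hassoc.apply_update_const_zero_s4 hn hmap hcanc hu hidem ht

theorem CancOn.apply_update_lt_of_apply_update_lt (hI : I.OrdConnected)
    (hcont : ContinuousOn f {x | ∀ i, x i ∈ I}) (hcanc : CancOn n I f) {k : Fin n} {a b : ℝ}
    (ha : a ∈ I) (hb : b ∈ I) {p q : Fin n → ℝ} (hp : ∀ i, p i ∈ I) (hq : ∀ i, q i ∈ I)
    (hpab : f (update p k a) < f (update p k b)) : f (update q k a) < f (update q k b) := by
  by_contra! hqab
  have hS : IsPreconnected {x : Fin n → ℝ | ∀ i, x i ∈ I} := by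
    simpa [Set.pi] using isPreconnected_univ_pi fun _ : Fin n => hI.isPreconnected
  have hcont_update : ∀ {s}, s ∈ I →
      ContinuousOn (fun x => f (update x k s)) {x | ∀ i, x i ∈ I} := fun hs =>
    hcont.comp (by fun_prop) fun x hx => update_mem_of_forall_mem_s4 hx k hs
  obtain ⟨r, hr, hrab⟩ := hS.intermediate_value₂ hp hq (hcont_update ha) (hcont_update hb)
    hpab.le hqab
  have hab : a = b := by
    simpa using hcanc k _ _ (update_mem_of_forall_mem_s4 hr k ha)
      (update_mem_of_forall_mem_s4 hr k hb) (fun i hi => by simp [hi]) hrab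
  exact hpab.ne (by rw [hab])

theorem strictMonoOn_apply_update_of_idempotent (hn : 2 ≤ n) (hI : I.OrdConnected)
    (hmap : ∀ x : Fin n → ℝ, (∀ i, x i ∈ I) → f x ∈ I)
    (hcont : ContinuousOn f {x | ∀ i, x i ∈ I}) (hsym : SymmOn n I f) (hcanc : CancOn n I f)
    (hassoc : NAssocOn n I f) {u : ℝ} (hu : u ∈ I) (hidem : f (fun _ => u) = u) (k : Fin n)
    {p : Fin n → ℝ} (hp : ∀ i, p i ∈ I) : StrictMonoOn (fun s => f (update p k s)) I := by
  intro a ha b hb hab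
  refine hcanc.apply_update_lt_of_apply_update_lt hI hcont ha hb (fun _ => hu) hp ?_
  rwa [hassoc.apply_update_const hn hmap hsym hcanc hu hidem ha,
    hassoc.apply_update_const hn hmap hsym hcanc hu hidem hb]

theorem le_of_le_of_idempotent (hn : 2 ≤ n) (hI : I.OrdConnected)
    (hmap : ∀ x : Fin n → ℝ, (∀ i, x i ∈ I) → f x ∈ I)
    (hcont : ContinuousOn f {x | ∀ i, x i ∈ I}) (hsym : SymmOn n I f) (hcanc : CancOn n I f)
    (hassoc : NAssocOn n I f) {d e : ℝ} (hd : d ∈ I) (he : e ∈ I) (hdi : f (fun _ => d) = d)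
    (hei : f (fun _ => e) = e) (hde : d ≤ e) : e ≤ d := by
  have hmono : MonotoneOn f {x | ∀ i, x i ∈ I} := monotoneOn_of_monotoneOn_update fun k _ hp =>
    (strictMonoOn_apply_update_of_idempotent hn hI hmap hcont hsym hcanc hassoc hd hdi k
      hp).monotoneOn
  let k₀ : Fin n := ⟨0, by omega⟩
  let k₁ : Fin n := ⟨1, hn⟩
  have hle : update (fun _ => d) k₀ e ≤ update (fun _ => e) k₁ d := by
    intro i
    rcases eq_or_ne i k₀ with rfl | h₀
    · simp [k₁, Fin.ext_iff]
    rcases eq_or_ne i k₁ with rfl | h₁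
    · simp [h₀]
    simpa [h₀, h₁] using hde
  calc e = f (update (fun _ => d) k₀ e) :=
        (hassoc.apply_update_const hn hmap hsym hcanc hd hdi he k₀).symm
    _ ≤ f (update (fun _ => e) k₁ d) := hmono (update_mem_of_forall_mem_s4 (fun _ => hd) k₀ he)
        (update_mem_of_forall_mem_s4 (fun _ => he) k₁ hd) hle
    _ = d := hassoc.apply_update_const hn hmap hsym hcanc he hei hd k₁

end

theorem stmt_4_general (n : ℕ) (hn : 2 ≤ n) (I : Set ℝ) (hI : I.OrdConnected)
    (f : (Fin n → ℝ) → ℝ)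
    (hmap : ∀ x : Fin n → ℝ, (∀ i, x i ∈ I) → f x ∈ I)
    (hcont : ContinuousOn f {x | ∀ i, x i ∈ I})
    (hsym : SymmOn n I f) (hcanc : CancOn n I f) (hassoc : NAssocOn n I f) :
    ∀ d ∈ I, ∀ e ∈ I, f (fun _ => d) = d → f (fun _ => e) = e → d = e := by
  intro d hd e he hdi hei
  have key := @le_of_le_of_idempotent n I f hn hI hmap hcont hsym hcanc hassoc
  rcases le_total d e with hde | hed
  · exact le_antisymm hde (key hd he hdi hei hde)
  · exact le_antisymm (key he hd hei hdi hed) hed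

/-- Claim 2: a continuous, symmetric, cancellative, associative `f : Iⁿ → I` on a
nontrivial real interval has at most one idempotent. -/
theorem stmt_4 (n : ℕ) (hn : 2 ≤ n) (I : Set ℝ) (hI : I.OrdConnected)
    (hne : ∃ a ∈ I, ∃ b ∈ I, a ≠ b)
    (f : (Fin n → ℝ) → ℝ)
    (hmap : ∀ x : Fin n → ℝ, (∀ i, x i ∈ I) → f x ∈ I)
    (hcont : ContinuousOn f {x | ∀ i, x i ∈ I})
    (hsym : SymmOn n I f) (hcanc : CancOn n I f) (hassoc : NAssocOn n I f) :
    ∀ d ∈ I, ∀ e ∈ I, f (fun _ => d) = d → f (fun _ => e) = e → d = e :=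
  stmt_4_general n hn I hI f hmap hcont hsym hcanc hassoc
end

section
/- Let I be a nontrivial real interval and f : Iⁿ → I continuous, symmetric, cancellative, and associative, with c ∈ I satisfying c < f(c,…,c). For fixed x ∈ I define the sequence x₀ = x, x_m = f(x_{m-1}, c, …, c). Then (x_m) is strictly increasing and its limit is not in I; consequently sup I is not attained and I is open at its upper end. -/
/-!
Write `g t = f(t, c, …, c)`. Associativity gives `g (g t) = f(t, f(cⁿ), c, …, c)`, so at a fixed
point `t = g t` we get `f(t, c, …, c) = f(t, f(cⁿ), c, …, c)`, and cancelling the second slot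
yields `c = f(cⁿ)`. Hence `g` has no fixed point in `I`; as `I` is an interval, `g` is continuous
and `g c > c`, the intermediate value theorem gives `g t > t` on all of `I`. So the orbit is
strictly increasing, a limit in `I` would be a fixed point of `g`, and a greatest element of `I`
would make the orbit converge in `I`.
-/

open Set Filter Topology

theorem IsPreconnected.lt_apply_of_forall_ne {α : Type*} [LinearOrder α] [TopologicalSpace α]
    [OrderClosedTopology α] {s : Set α} {g : α → α} (hs : IsPreconnected s)
    (hg : ContinuousOn g s) (hfix : ∀ t ∈ s, g t ≠ t) {c : α} (hc : c ∈ s) (hcg : c < g c)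
    {t : α} (ht : t ∈ s) : t < g t := by
  by_contra! hgt
  obtain ⟨x, hx, hgx⟩ := hs.intermediate_value₂ hc ht continuousOn_id hg hcg.le hgt
  exact hfix x hx hgx.symm

theorem ContinuousWithinAt.isFixedPt_of_tendsto {α : Type*} [TopologicalSpace α] [T2Space α]
    {s : Set α} {g : α → α} {u : ℕ → α} {L : α} (hg : ContinuousWithinAt g s L)
    (hu : ∀ m, u m ∈ s) (hsucc : ∀ m, u (m + 1) = g (u m)) (hL : Tendsto u atTop (𝓝 L)) :
    Function.IsFixedPt g L := by
  have hgu : Tendsto (fun m => g (u m)) atTop (𝓝 (g L)) :=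
    hg.tendsto.comp (tendsto_nhdsWithin_iff.2 ⟨hL, Eventually.of_forall hu⟩)
  refine tendsto_nhds_unique ?_ ((tendsto_add_atTop_iff_nat 1).2 hL)
  simpa only [hsucc] using hgu

theorem Set.OrdConnected.ciSup_mem {α ι : Type*} [ConditionallyCompleteLinearOrder α]
    [Nonempty ι] {s : Set α} (hs : s.OrdConnected) {u : ι → α} (hu : ∀ i, u i ∈ s) {M : α}
    (hM : M ∈ s) (hle : ∀ i, u i ≤ M) : ⨆ i, u i ∈ s := by
  obtain ⟨i⟩ := ‹Nonempty ι›
  exact hs.out (hu i) hM ⟨le_ciSup ⟨M, forall_mem_range.2 hle⟩ i, ciSup_le hle⟩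

section ConstTranslate

variable {n : ℕ} {I : Set ℝ} {f : (Fin n → ℝ) → ℝ} {c t : ℝ}

def constTranslate (f : (Fin n → ℝ) → ℝ) (c t : ℝ) : ℝ :=
  f (fun i : Fin n => if (i : ℕ) = 0 then t else c)

theorem constTranslate_self : constTranslate f c c = f (fun _ => c) := by
  simp only [constTranslate, ite_self]

theorem constTranslate_mapsTo (hmap : ∀ x : Fin n → ℝ, (∀ i, x i ∈ I) → f x ∈ I) (hc : c ∈ I) :
    MapsTo (constTranslate f c) I I := fun t ht =>
  hmap _ fun i => by split_ifs <;> assumption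

theorem constTranslate_continuousOn (hcont : ContinuousOn f {x | ∀ i, x i ∈ I}) (hc : c ∈ I) :
    ContinuousOn (constTranslate f c) I :=
  hcont.comp (continuous_pi fun i => by split_ifs <;> fun_prop).continuousOn
    fun t ht i => by split_ifs <;> assumption

theorem constTranslate_constTranslate (hn : 2 ≤ n) (hassoc : NAssocOn n I f) (ht : t ∈ I)
    (hc : c ∈ I) :
    constTranslate f c (constTranslate f c t) =
      f (fun j : Fin n =>
        if (j : ℕ) = 0 then t else if (j : ℕ) = 1 then f (fun _ => c) else c) := by
  have hassoc₀ := hassoc (fun j => if j = 0 then t else c) (fun j _ => by split_ifs <;> assumption) 0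
    (by omega)
  unfold constTranslate
  convert hassoc₀ using 2 <;> funext j <;> split_ifs <;> first | omega | rfl | simp

theorem constTranslate_ne_self (hn : 2 ≤ n) (hmap : ∀ x : Fin n → ℝ, (∀ i, x i ∈ I) → f x ∈ I)
    (hcanc : CancOn n I f) (hassoc : NAssocOn n I f) (hc : c ∈ I) (hcf : c ≠ f (fun _ => c))
    (ht : t ∈ I) : constTranslate f c t ≠ t := by
  intro hfix
  have htranslate := constTranslate_constTranslate hn hassoc ht hc
  rw [hfix, hfix] at htranslate
  have hslot := hcanc ⟨1, by omega⟩ (fun i => if (i : ℕ) = 0 then t else c) _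
    (fun i => by split_ifs <;> assumption)
    (fun i => by split_ifs <;> first | assumption | exact hmap _ fun _ => hc)
    (fun i hi => by
      have hi' : (i : ℕ) ≠ 1 := fun h => hi (Fin.ext h)
      simp [hi']) (hfix.trans htranslate)
  exact hcf (by simpa using hslot)

end ConstTranslate

theorem stmt_6_general (n : ℕ) (hn : 2 ≤ n) (I : Set ℝ) (hI : I.OrdConnected)
    (f : (Fin n → ℝ) → ℝ)
    (hmap : ∀ x : Fin n → ℝ, (∀ i, x i ∈ I) → f x ∈ I)
    (hcont : ContinuousOn f {x | ∀ i, x i ∈ I})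
    (hcanc : CancOn n I f) (hassoc : NAssocOn n I f)
    (c : ℝ) (hc : c ∈ I) (hcf : c < f (fun _ => c)) :
    ∀ x ∈ I, ∀ u : ℕ → ℝ, u 0 = x →
      (∀ m : ℕ, u (m + 1) = f (fun i => if (i : ℕ) = 0 then u m else c)) →
      StrictMono u ∧
      (∀ L ∈ I, ¬ Filter.Tendsto u Filter.atTop (nhds L)) ∧
      ¬ ∃ M ∈ I, ∀ y ∈ I, y ≤ M := by
  intro x hx u hu0 hsucc
  have hu : ∀ m, u m ∈ I := fun m => by
    induction m with
    | zero => exact hu0 ▸ hx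
    | succ m ih => exact hsucc m ▸ constTranslate_mapsTo hmap hc ih
  have hcont' := constTranslate_continuousOn hcont hc
  have hnofix : ∀ t ∈ I, constTranslate f c t ≠ t := fun t ht =>
    constTranslate_ne_self hn hmap hcanc hassoc hc hcf.ne ht
  have hlt : ∀ t ∈ I, t < constTranslate f c t := fun t ht =>
    hI.isPreconnected.lt_apply_of_forall_ne hcont' hnofix hc (constTranslate_self ▸ hcf) ht
  have hmono : StrictMono u := strictMono_nat_of_lt_succ fun m => hsucc m ▸ hlt _ (hu m)
  have hnolim : ∀ L ∈ I, ¬ Tendsto u atTop (𝓝 L) := fun L hL hL' =>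
    hnofix L hL ((hcont' L hL).isFixedPt_of_tendsto hu hsucc hL')
  refine ⟨hmono, hnolim, ?_⟩
  rintro ⟨M, hM, hMub⟩
  have hle : ∀ m, u m ≤ M := fun m => hMub _ (hu m)
  exact hnolim _ (hI.ciSup_mem hu hM hle)
    (tendsto_atTop_ciSup hmono.monotone ⟨M, forall_mem_range.2 hle⟩)

/-- Claim 3: if `c < f(c,…,c)`, then for every `x ∈ I` the sequence
`x₀ = x`, `x_{m+1} = f(x_m, c, …, c)` is strictly increasing, its limit is not in `I`,
and consequently `I` has no greatest element (it is open at its upper end). -/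
theorem stmt_6 (n : ℕ) (hn : 2 ≤ n) (I : Set ℝ) (hI : I.OrdConnected)
    (hne : ∃ a ∈ I, ∃ b ∈ I, a ≠ b)
    (f : (Fin n → ℝ) → ℝ)
    (hmap : ∀ x : Fin n → ℝ, (∀ i, x i ∈ I) → f x ∈ I)
    (hcont : ContinuousOn f {x | ∀ i, x i ∈ I})
    (hsym : SymmOn n I f) (hcanc : CancOn n I f) (hassoc : NAssocOn n I f)
    (c : ℝ) (hc : c ∈ I) (hcf : c < f (fun _ => c)) :
    ∀ x ∈ I, ∀ u : ℕ → ℝ, u 0 = x →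
      (∀ m : ℕ, u (m + 1) = f (fun i => if (i : ℕ) = 0 then u m else c)) →
      StrictMono u ∧
      (∀ L ∈ I, ¬ Filter.Tendsto u Filter.atTop (nhds L)) ∧
      ¬ ∃ M ∈ I, ∀ y ∈ I, y ≤ M :=
  stmt_6_general n hn I hI f hmap hcont hcanc hassoc c hc hcf
end

section
/- Let g : I^(n) → I be an n-associative function. Then g(x g(y) z) = g(x y z) for all strings x y z ∈ I^(n) with y ∈ I^(n), i.e., replacing a substring of length ≡ 1 (mod n-1) by its g-value does not change the g-value of the whole string. -/
/-!
By (ii) and (iii), a prefix `l ∈ I⁽ⁿ⁾` of a string may be evaluated first,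
`g (l ++ r) = g (g l :: r)`, when `|r| = n - 1` and hence, by induction, whenever
`n - 1 ∣ |r|`. Associativity of `gₙ` slides a block of length `n` inside a window of length
`2n - 1`, so within such a window the block may be evaluated in place. A block of length `n`
inside an arbitrary string is brought into a window by evaluating prefixes on both sides of
it, and a general block `y` is reduced to the case `|y| = n` by induction on `|y|`, writing
`g y = g (g y' :: s)` with `|s| = n - 1`.
-/

theorem List.exists_eq_append_length_left {α : Type*} {l : List α} {j : ℕ}
    (h : j ≤ l.length) :
    ∃ l₁ l₂, l = l₁ ++ l₂ ∧ l₁.length = j :=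
  ⟨l.take j, l.drop j, (l.take_append_drop j).symm, List.length_take_of_le h⟩

theorem List.exists_eq_append_length_right {α : Type*} {l : List α} {j : ℕ}
    (h : j ≤ l.length) :
    ∃ l₁ l₂, l = l₁ ++ l₂ ∧ l₂.length = j :=
  ⟨l.take (l.length - j), l.drop (l.length - j), (l.take_append_drop _).symm, by simp; omega⟩

section

variable {α : Type*}

/-- The conditions (i)–(iii) of `n`-associativity, for strings encoded as lists. -/
structure IsNAssociative (n : ℕ) (g : List α → α) : Prop where
  assoc : ∀ x y z x' y' z' : List α, x ++ y ++ z = x' ++ y' ++ z' →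
    y.length = n → y'.length = n → (x ++ y ++ z).length = 2 * n - 1 →
    g (x ++ g y :: z) = g (x' ++ g y' :: z')
  apply_append : ∀ l r : List α, l.length ≡ 1 [MOD n - 1] → 2 ≤ l.length →
    r.length = n - 1 → g (l ++ r) = g (g l :: r)
  apply_singleton_apply : ∀ l : List α, l ≠ [] → l.length ≡ 1 [MOD n - 1] → g [g l] = g l
  apply_apply_singleton : ∀ (x : List α) (a : α) (z : List α),
    (x ++ a :: z).length ≡ 1 [MOD n - 1] → g (x ++ g [a] :: z) = g (x ++ a :: z)

namespace IsNAssociative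

variable {n : ℕ} {g : List α → α}

theorem apply_append_of_length_eq (hg : IsNAssociative n g) {l r : List α} (hl : l ≠ [])
    (hl1 : l.length ≡ 1 [MOD n - 1]) (hr : r.length = n - 1) : g (l ++ r) = g (g l :: r) := by
  rcases Nat.lt_or_ge l.length 2 with hl2 | hl2
  · obtain ⟨a, rfl⟩ := (List.length_eq_one_iff (l := l)).mp
      (by have := List.length_pos_iff.mpr hl; omega)
    exact (hg.apply_apply_singleton [] a r (by simp [hr])).symm
  · exact hg.apply_append l r hl1 hl2 hr

theorem apply_append_of_modEq_zero (hg : IsNAssociative n g) (hn : 2 ≤ n) {l r : List α}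
    (hl : l ≠ []) (hl1 : l.length ≡ 1 [MOD n - 1]) (hr : r.length ≡ 0 [MOD n - 1]) :
    g (l ++ r) = g (g l :: r) := by
  rcases Nat.eq_zero_or_pos r.length with hr0 | hr0
  · obtain rfl : r = [] := List.length_eq_zero_iff.mp hr0
    simpa using (hg.apply_singleton_apply l hl hl1).symm
  obtain ⟨r', s, rfl, hs⟩ := List.exists_eq_append_length_right (j := n - 1)
    (by simpa using hr.symm.add_le_of_lt hr0)
  have hr' : r'.length ≡ 0 [MOD n - 1] :=
    Nat.add_modEq_right.symm.trans (by simpa [hs] using hr)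
  calc g (l ++ (r' ++ s)) = g (g (l ++ r') :: s) := by
        rw [← List.append_assoc]
        exact hg.apply_append_of_length_eq (by simp [hl]) (by simpa using hl1.add hr') hs
    _ = g (g (g l :: r') :: s) := by rw [hg.apply_append_of_modEq_zero hn hl hl1 hr']
    _ = g (g l :: (r' ++ s)) :=
        (hg.apply_append_of_length_eq (List.cons_ne_nil _ _)
          (by simpa using hr'.add_right 1) hs).symm
termination_by r.length
decreasing_by subst_vars; simp only [List.length_append]; omega

theorem apply_window (hg : IsNAssociative n g) (hn : 2 ≤ n) {x y z : List α}
    (hy : y.length = n) (hxz : x.length + z.length = n - 1) :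
    g (x ++ g y :: z) = g (x ++ y ++ z) := by
  obtain ⟨y₁, y₂, rfl, hy₁⟩ :=
    List.exists_eq_append_length_left (l := y) (j := n - x.length) (by omega)
  have hy₂ : y₂.length = n - 1 - z.length := by simp only [List.length_append] at hy; omega
  have hxy₁ : (x ++ y₁).length = n := by simp only [List.length_append]; omega
  calc g (x ++ g (y₁ ++ y₂) :: z) = g ([] ++ g (x ++ y₁) :: (y₂ ++ z)) :=
        hg.assoc _ _ _ _ _ _ (by simp) hy hxy₁
          (by simp only [List.length_append]; omega)
    _ = g (x ++ y₁ ++ (y₂ ++ z)) :=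
        (hg.apply_append _ _ (hxy₁ ▸ Nat.modEq_sub (by omega)) (by omega)
          (by simp only [List.length_append]; omega)).symm
    _ = g (x ++ (y₁ ++ y₂) ++ z) := by simp

theorem apply_infix_of_length_eq (hg : IsNAssociative n g) (hn : 2 ≤ n) {x y z : List α}
    (hy : y.length = n) (hxz : x.length + z.length ≡ 0 [MOD n - 1]) :
    g (x ++ g y :: z) = g (x ++ y ++ z) := by
  have hy1 : y.length ≡ 1 [MOD n - 1] := hy ▸ Nat.modEq_sub (by omega)
  rcases Nat.eq_zero_or_pos (x.length + z.length) with h0 | hpos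
  · obtain ⟨rfl, rfl⟩ : x = [] ∧ z = [] := by simp only [← List.length_eq_zero_iff]; omega
    simpa using hg.apply_singleton_apply y (List.ne_nil_of_length_pos (by omega)) hy1
  rcases Nat.lt_or_ge x.length n with hx | hx
  · obtain ⟨z₁, z₂, rfl, hz₁⟩ := List.exists_eq_append_length_left (l := z)
      (j := n - 1 - x.length) (by have := hxz.symm.add_le_of_lt hpos; omega)
    have hz₂ : z₂.length ≡ 0 [MOD n - 1] := Nat.add_modEq_left.symm.trans <| by
      rw [show n - 1 + z₂.length = x.length + (z₁ ++ z₂).length by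
        simp only [List.length_append]; omega]
      exact hxz
    have hwindow : (x ++ g y :: z₁).length ≡ 1 [MOD n - 1] := by
      rw [show (x ++ g y :: z₁).length = n - 1 + 1 by
        simp only [List.length_append, List.length_cons]; omega]
      exact Nat.add_modEq_left
    calc g (x ++ g y :: (z₁ ++ z₂)) = g (g (x ++ g y :: z₁) :: z₂) := by
          simpa using hg.apply_append_of_modEq_zero hn (by simp) hwindow hz₂
      _ = g (g (x ++ y ++ z₁) :: z₂) := by
          rw [hg.apply_window hn hy (by simp only [List.length_append] at hpos; omega)]
      _ = g (x ++ y ++ (z₁ ++ z₂)) := by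
          rw [← List.append_assoc]
          refine (hg.apply_append_of_modEq_zero hn
            (List.ne_nil_of_length_pos (by simp only [List.length_append]; omega)) ?_ hz₂).symm
          rw [show (x ++ y ++ z₁).length = n - 1 + y.length by
            simp only [List.length_append]; omega]
          exact Nat.add_modEq_left.trans hy1
  · obtain ⟨x₁, x₂, rfl, hx₁⟩ := List.exists_eq_append_length_left (l := x) (j := n) hx
    have hx₁1 : x₁.length ≡ 1 [MOD n - 1] := hx₁ ▸ Nat.modEq_sub (by omega)
    have hx₁0 : x₁ ≠ [] := List.ne_nil_of_length_pos (by omega)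
    have hrest {m : ℕ} (hm : m + (n - 1) = (x₁ ++ x₂).length + z.length) :
        m ≡ 0 [MOD n - 1] :=
      Nat.add_modEq_right.symm.trans (hm ▸ hxz)
    calc g (x₁ ++ x₂ ++ g y :: z) = g (g x₁ :: (x₂ ++ g y :: z)) := by
          rw [List.append_assoc]
          refine hg.apply_append_of_modEq_zero hn hx₁0 hx₁1 (hrest ?_)
          simp only [List.length_append, List.length_cons]; omega
      _ = g (g x₁ :: x₂ ++ y ++ z) := by
          refine hg.apply_infix_of_length_eq (x := g x₁ :: x₂) hn hy (hrest ?_)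
          simp only [List.length_append, List.length_cons]; omega
      _ = g (x₁ ++ x₂ ++ y ++ z) := by
          simp only [List.append_assoc, List.cons_append]
          refine (hg.apply_append_of_modEq_zero hn hx₁0 hx₁1 ?_).symm
          rw [show (x₂ ++ (y ++ z)).length = (x₁ ++ x₂).length + z.length by
            simp only [List.length_append]; omega]
          exact hxz
termination_by x.length
decreasing_by subst_vars; simp only [List.length_append, List.length_cons]; omega

theorem apply_infix (hg : IsNAssociative n g) (hn : 2 ≤ n) {x y z : List α}
    (hxyz : (x ++ y ++ z).length ≡ 1 [MOD n - 1]) (hy : y ≠ [])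
    (hy1 : y.length ≡ 1 [MOD n - 1]) : g (x ++ g y :: z) = g (x ++ y ++ z) := by
  have hxz : x.length + z.length ≡ 0 [MOD n - 1] :=
    Nat.ModEq.add_right_cancel hy1 <| by
      rw [zero_add, show x.length + z.length + y.length = (x ++ y ++ z).length by
        simp only [List.length_append]; omega]
      exact hxyz
  rcases Nat.lt_or_ge 1 y.length with hy2 | hy2
  · obtain ⟨y', s, rfl, hs⟩ := List.exists_eq_append_length_right (l := y) (j := n - 1)
      (by have := hy1.symm.add_le_of_lt hy2; omega)
    have hy' : y'.length ≡ 1 [MOD n - 1] :=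
      Nat.add_modEq_right.symm.trans (by simpa [hs] using hy1)
    have hy'0 : y' ≠ [] := List.ne_nil_of_length_pos
      (by have := hy1.symm.add_le_of_lt hy2; simp only [List.length_append] at this; omega)
    calc g (x ++ g (y' ++ s) :: z) = g (x ++ g (g y' :: s) :: z) := by
          rw [hg.apply_append_of_length_eq hy'0 hy' hs]
      _ = g (x ++ (g y' :: s) ++ z) :=
          hg.apply_infix_of_length_eq hn (by simp [hs]; omega) hxz
      _ = g (x ++ y' ++ (s ++ z)) := by
          simpa using hg.apply_infix hn (by simpa [add_assoc] using hxyz) hy'0 hy'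
      _ = g (x ++ (y' ++ s) ++ z) := by simp
  · obtain ⟨a, rfl⟩ := (List.length_eq_one_iff (l := y)).mp
      (by have := List.length_pos_iff.mpr hy; omega)
    simpa using hg.apply_apply_singleton x a z (by simpa using hxyz)
termination_by y.length
decreasing_by subst_vars; simp only [List.length_append]; omega

end IsNAssociative

end

theorem stmt_7_general {α : Type*} (n : ℕ) (hn : 2 ≤ n) (g : List α → α)
    -- (i): the restriction gₙ of g to length-n strings is associative
    (hassoc : ∀ x y z x' y' z' : List α, x ++ y ++ z = x' ++ y' ++ z' →
      y.length = n → y'.length = n → (x ++ y ++ z).length = 2 * n - 1 →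
      g (x ++ g y :: z) = g (x' ++ g y' :: z'))
    -- (ii): condition (4), left-nested recursion for m > n
    (hrec : ∀ l r : List α, l.length % (n - 1) = 1 % (n - 1) → 2 ≤ l.length →
      r.length = n - 1 → g (l ++ r) = g (g l :: r))
    -- (iii): condition (5): g₁ ∘ g = g and g(x g₁(y) z) = g(x y z) for single letters y
    (h5a : ∀ l : List α, l ≠ [] → l.length % (n - 1) = 1 % (n - 1) → g [g l] = g l)
    (h5b : ∀ (x : List α) (a : α) (z : List α),
      (x ++ a :: z).length % (n - 1) = 1 % (n - 1) →
      g (x ++ g [a] :: z) = g (x ++ a :: z)) :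
    ∀ x y z : List α, (x ++ y ++ z).length % (n - 1) = 1 % (n - 1) →
      y ≠ [] → y.length % (n - 1) = 1 % (n - 1) →
      g (x ++ g y :: z) = g (x ++ y ++ z) :=
  fun _ _ _ => (IsNAssociative.mk hassoc hrec h5a h5b).apply_infix hn

/-- Proposition 2.5, (i) ⟹ (iii): if `g : I⁽ⁿ⁾ → I` is `n`-associative (its
restriction to length-`n` strings is associative, it is built by the left-nested
recursion (4), and condition (5) holds), then replacing a substring of length
`≡ 1 (mod n-1)` by its `g`-value does not change the `g`-value of the whole string.
Strings over `I` are encoded as lists; `I⁽ⁿ⁾` consists of the nonempty lists whose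
length is `≡ 1 (mod n-1)`. -/
theorem stmt_7 {α : Type*} [Nonempty α] (n : ℕ) (hn : 2 ≤ n) (g : List α → α)
    -- (i): the restriction gₙ of g to length-n strings is associative
    (hassoc : ∀ x y z x' y' z' : List α, x ++ y ++ z = x' ++ y' ++ z' →
      y.length = n → y'.length = n → (x ++ y ++ z).length = 2 * n - 1 →
      g (x ++ g y :: z) = g (x' ++ g y' :: z'))
    -- (ii): condition (4), left-nested recursion for m > n
    (hrec : ∀ l r : List α, l.length % (n - 1) = 1 % (n - 1) → 2 ≤ l.length →
      r.length = n - 1 → g (l ++ r) = g (g l :: r))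
    -- (iii): condition (5): g₁ ∘ g = g and g(x g₁(y) z) = g(x y z) for single letters y
    (h5a : ∀ l : List α, l ≠ [] → l.length % (n - 1) = 1 % (n - 1) → g [g l] = g l)
    (h5b : ∀ (x : List α) (a : α) (z : List α),
      (x ++ a :: z).length % (n - 1) = 1 % (n - 1) →
      g (x ++ g [a] :: z) = g (x ++ a :: z)) :
    ∀ x y z : List α, (x ++ y ++ z).length % (n - 1) = 1 % (n - 1) →
      y ≠ [] → y.length % (n - 1) = 1 % (n - 1) →
      g (x ++ g y :: z) = g (x ++ y ++ z) :=
  stmt_7_general n hn g hassoc hrec h5a h5b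
end

section
/- Let g : I^(n) → I be a function with g₁ ∘ g = g satisfying g(g(x₁)⋯g(xₙ)) = g(x₁⋯xₙ) for all strings x₁,…,xₙ ∈ I^(n) (concatenation on the right). Then g satisfies g(x g(y) z) = g(x y z) for every string x y z ∈ I^(n) with y ∈ I^(n). -/
/-!
Write `m = n - 1`. If `x` and `z` can be cut into `a` and `b` words of `I⁽ⁿ⁾` with `a + b = m`,
then `x y z` and `x g(y) z` are both concatenations of `n` words, and applying the hypothesis to
both (together with `g(g(y)) = g(y)`) gives the claim. Such a cut exists unless `x` and `z` both
have length divisible by `m`; in that case one first absorbs `z` into `y`, i.e. uses the claim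
with empty `x` to get `g(g(y) z) = g(y z)`, and then the claim with empty `z` twice.
-/

namespace StringFunction

variable {α : Type*} {m : ℕ} {g : List α → α}

/-- A word of `I⁽ᵐ⁺¹⁾`. -/
def IsWord (m : ℕ) (u : List α) : Prop :=
  u ≠ [] ∧ u.length ≡ 1 [MOD m]

/-- `g(g(x₁)⋯g(xₙ)) = g(x₁⋯xₙ)` for words `x₁, …, xₙ` of `I⁽ⁿ⁾`, with `n = m + 1`. -/
def IsFlattenInvariant (m : ℕ) (g : List α → α) : Prop :=
  ∀ L : List (List α), L.length = m + 1 → (∀ u ∈ L, IsWord m u) → g (L.map g) = g L.flatten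

theorem isWord_singleton (a : α) : IsWord m [a] :=
  ⟨List.cons_ne_nil a [], rfl⟩

theorem IsWord.append_of_dvd {y z : List α} (hy : IsWord m y) (hz : m ∣ z.length) :
    IsWord m (y ++ z) := by
  refine ⟨by simp [hy.1], ?_⟩
  simpa using hy.2.add (Nat.modEq_zero_iff_dvd.2 hz)

theorem isFlattenInvariant_of_ofFn (h : ∀ l : Fin (m + 1) → List α, (∀ i, IsWord m (l i)) →
      g (List.ofFn fun i => g (l i)) = g (List.ofFn l).flatten) :
    IsFlattenInvariant m g := by
  intro L hL hwords
  generalize m + 1 = n at h hL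
  subst hL
  simpa using h (fun i => L[i]) fun i => hwords _ (List.getElem_mem _)

theorem exists_words_flatten_eq {w : List α} {a : ℕ} (ha : 0 < a) (haw : a ≤ w.length)
    (hw : w.length ≡ a [MOD m]) :
    ∃ W : List (List α), W.length = a ∧ (∀ u ∈ W, IsWord m u) ∧ W.flatten = w := by
  -- one long word followed by `a - 1` letters
  set k := w.length - (a - 1) with hk_def
  have hk : k ≡ 1 [MOD m] := by
    refine Nat.ModEq.add_left_cancel' (a - 1) ?_
    rwa [Nat.add_sub_cancel' (by omega), Nat.sub_add_cancel ha]
  refine ⟨w.take k :: (w.drop k).map fun c => [c], ?_, ?_, ?_⟩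
  · simp only [List.length_cons, List.length_map, List.length_drop]
    omega
  · simp only [List.mem_cons, List.mem_map]
    rintro u (rfl | ⟨c, -, rfl⟩)
    · have hlen : (w.take k).length = k := List.length_take_of_le (by omega)
      exact ⟨List.ne_nil_of_length_pos (by omega), by rwa [hlen]⟩
    · exact isWord_singleton c
  · rw [List.flatten_cons, ← List.flatMap_def, List.flatMap_singleton', List.take_append_drop]

theorem g_flatten_append_g_cons_eq {X Z : List (List α)} {y : List α}
    (hg : IsFlattenInvariant m g) (hg1 : ∀ u, IsWord m u → g [g u] = g u)
    (hXZ : X.length + Z.length = m) (hX : ∀ u ∈ X, IsWord m u) (hZ : ∀ u ∈ Z, IsWord m u)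
    (hy : IsWord m y) :
    g (X.flatten ++ g y :: Z.flatten) = g (X.flatten ++ y ++ Z.flatten) := by
  have hlen : ∀ v : List α, (X ++ v :: Z).length = m + 1 := by simp; omega
  have hwords : ∀ v, IsWord m v → ∀ u ∈ X ++ v :: Z, IsWord m u := by
    simp only [List.mem_append, List.mem_cons]
    rintro v hv u (hu | rfl | hu)
    exacts [hX u hu, hv, hZ u hu]
  calc g (X.flatten ++ g y :: Z.flatten) = g ((X ++ [g y] :: Z).flatten) := by simp
    _ = g ((X ++ [g y] :: Z).map g) := (hg _ (hlen _) (hwords _ (isWord_singleton _))).symm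
    _ = g ((X ++ y :: Z).map g) := by simp [hg1 y hy]
    _ = g ((X ++ y :: Z).flatten) := hg _ (hlen _) (hwords _ hy)
    _ = g (X.flatten ++ y ++ Z.flatten) := by simp

theorem exists_words_flatten_eq_of_dvd {w : List α} (hw : w ≠ []) (hmw : m ∣ w.length) :
    ∃ W : List (List α), W.length = m ∧ (∀ u ∈ W, IsWord m u) ∧ W.flatten = w :=
  have hlen : 0 < w.length := List.length_pos_iff.2 hw
  exists_words_flatten_eq (Nat.pos_of_dvd_of_pos hmw hlen) (Nat.le_of_dvd hlen hmw)
    ((Nat.modEq_zero_iff_dvd.2 hmw).trans (Nat.modEq_zero_iff_dvd.2 dvd_rfl).symm)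

section Absorb

variable {x y z : List α}

theorem g_cons_g_of_dvd (hg : IsFlattenInvariant m g) (hg1 : ∀ u, IsWord m u → g [g u] = g u)
    (hy : IsWord m y) (hz : z ≠ []) (hmz : m ∣ z.length) :
    g (g y :: z) = g (y ++ z) := by
  obtain ⟨Z, hZlen, hZ, rfl⟩ := exists_words_flatten_eq_of_dvd hz hmz
  simpa using g_flatten_append_g_cons_eq (X := []) hg hg1 (by simpa) (by simp) hZ hy

theorem g_append_g_of_dvd (hg : IsFlattenInvariant m g) (hg1 : ∀ u, IsWord m u → g [g u] = g u)
    (hy : IsWord m y) (hx : x ≠ []) (hmx : m ∣ x.length) :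
    g (x ++ [g y]) = g (x ++ y) := by
  obtain ⟨X, hXlen, hX, rfl⟩ := exists_words_flatten_eq_of_dvd hx hmx
  simpa using g_flatten_append_g_cons_eq (Z := []) hg hg1 (by simpa) hX (by simp) hy

theorem g_append_g_cons_of_not_dvd (hg : IsFlattenInvariant m g)
    (hg1 : ∀ u, IsWord m u → g [g u] = g u) (hm : 0 < m) (hy : IsWord m y)
    (hx : ¬ m ∣ x.length) (hxz : m ∣ x.length + z.length) :
    g (x ++ g y :: z) = g (x ++ y ++ z) := by
  obtain ⟨r, hr_def⟩ : ∃ r, r = x.length % m := ⟨_, rfl⟩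
  have hr : 0 < r := Nat.pos_of_ne_zero fun h => hx (Nat.dvd_of_mod_eq_zero (hr_def ▸ h))
  have hrm : r < m := hr_def ▸ Nat.mod_lt _ hm
  have hxr : x.length ≡ r [MOD m] := hr_def ▸ (Nat.mod_modEq _ _).symm
  have hzr : z.length ≡ m - r [MOD m] := by
    refine Nat.ModEq.add_left_cancel hxr ((Nat.modEq_zero_iff_dvd.2 hxz).trans ?_)
    rw [Nat.add_sub_cancel' hrm.le]
    exact (Nat.modEq_zero_iff_dvd.2 dvd_rfl).symm
  have hzle : m - r ≤ z.length :=
    calc m - r = z.length % m := ((Nat.mod_eq_of_lt (by omega)).symm.trans hzr.symm)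
      _ ≤ z.length := Nat.mod_le _ _
  obtain ⟨X, hXlen, hX, rfl⟩ := exists_words_flatten_eq hr (hr_def ▸ Nat.mod_le _ _) hxr
  obtain ⟨Z, hZlen, hZ, rfl⟩ := exists_words_flatten_eq (by omega) hzle hzr
  exact g_flatten_append_g_cons_eq hg hg1 (by omega) hX hZ hy

theorem g_append_g_cons_eq (hg : IsFlattenInvariant m g) (hg1 : ∀ u, IsWord m u → g [g u] = g u)
    (hm : 0 < m) (hy : IsWord m y) (hxyz : (x ++ y ++ z).length ≡ 1 [MOD m]) :
    g (x ++ g y :: z) = g (x ++ y ++ z) := by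
  have hxz : m ∣ x.length + z.length := by
    refine Nat.modEq_zero_iff_dvd.1 (Nat.ModEq.add_right_cancel' y.length ?_)
    have hlen : x.length + z.length + y.length = (x ++ y ++ z).length := by simp; omega
    rw [hlen, zero_add]
    exact hxyz.trans hy.2.symm
  by_cases hmx : m ∣ x.length
  swap
  · exact g_append_g_cons_of_not_dvd hg hg1 hm hy hmx hxz
  have hmz : m ∣ z.length := (Nat.dvd_add_right hmx).1 hxz
  rcases eq_or_ne x [] with rfl | hx <;> rcases eq_or_ne z [] with rfl | hz
  · simpa using hg1 y hy
  · simpa using g_cons_g_of_dvd hg hg1 hy hz hmz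
  · simpa using g_append_g_of_dvd hg hg1 hy hx hmx
  calc g (x ++ g y :: z) = g (x ++ [g (g y :: z)]) :=
        (g_append_g_of_dvd hg hg1 ((isWord_singleton _).append_of_dvd hmz) hx hmx).symm
    _ = g (x ++ [g (y ++ z)]) := by rw [g_cons_g_of_dvd hg hg1 hy hz hmz]
    _ = g (x ++ y ++ z) := by
      rw [g_append_g_of_dvd hg hg1 (hy.append_of_dvd hmz) hx hmx, List.append_assoc]

end Absorb

end StringFunction

open StringFunction in
theorem stmt_8_general {α : Type*} (n : ℕ) (hn : 2 ≤ n) (g : List α → α)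
    (h1 : ∀ l : List α, l ≠ [] → l.length % (n - 1) = 1 % (n - 1) → g [g l] = g l)
    (h2 : ∀ l : Fin n → List α, (∀ i, l i ≠ []) →
      (∀ i, (l i).length % (n - 1) = 1 % (n - 1)) →
      g (List.ofFn fun i => g (l i)) = g (List.flatten (List.ofFn l))) :
    ∀ x y z : List α, (x ++ y ++ z).length % (n - 1) = 1 % (n - 1) →
      y ≠ [] → y.length % (n - 1) = 1 % (n - 1) →
      g (x ++ g y :: z) = g (x ++ y ++ z) := by
  obtain ⟨m, rfl⟩ : ∃ m, n = m + 1 := ⟨n - 1, by omega⟩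
  simp only [Nat.add_sub_cancel] at h1 h2 ⊢
  intro x y z hxyz hy hym
  have hg : IsFlattenInvariant m g :=
    isFlattenInvariant_of_ofFn fun l hl => h2 l (fun i => (hl i).1) fun i => (hl i).2
  exact g_append_g_cons_eq hg (fun u hu => h1 u hu.1 hu.2) (by omega) ⟨hy, hym⟩ hxyz

/-- Proposition 2.5, (iv) ⟹ (iii): if `g : I⁽ⁿ⁾ → I` satisfies `g₁ ∘ g = g` and
`g(g(x₁)⋯g(xₙ)) = g(x₁⋯xₙ)` for all strings `x₁, …, xₙ ∈ I⁽ⁿ⁾`, then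
`g(x g(y) z) = g(x y z)` for every string `x y z ∈ I⁽ⁿ⁾` with `y ∈ I⁽ⁿ⁾`.
`I⁽ⁿ⁾` is the set of nonempty lists over `I` of length `≡ 1 (mod n-1)`. -/
theorem stmt_8 {α : Type*} [Nonempty α] (n : ℕ) (hn : 2 ≤ n) (g : List α → α)
    (h1 : ∀ l : List α, l ≠ [] → l.length % (n - 1) = 1 % (n - 1) → g [g l] = g l)
    (h2 : ∀ l : Fin n → List α, (∀ i, l i ≠ []) →
      (∀ i, (l i).length % (n - 1) = 1 % (n - 1)) →
      g (List.ofFn fun i => g (l i)) = g (List.flatten (List.ofFn l))) :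
    ∀ x y z : List α, (x ++ y ++ z).length % (n - 1) = 1 % (n - 1) →
      y ≠ [] → y.length % (n - 1) = 1 % (n - 1) →
      g (x ++ g y :: z) = g (x ++ y ++ z) :=
  stmt_8_general n hn g h1 h2
end

section
/- A function g : I* → I (with g₀(ε) = ε convention, i.e., g is defined on nonempty strings) satisfies g(x g(y) z) = g(x y z) for all strings x, y, z if and only if it satisfies g(g(x) g(y)) = g(x y) for all nonempty strings x, y together with g₁ ∘ g = g. -/
/-!
Both conditions say that `g` may be evaluated blockwise. Given the pair law, a nonempty prefix
`x` can always be split off as `g (x ++ w) = g [g x, g w]`, so everything reduces to the case of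
an empty prefix, `g (g y :: z) = g (y ++ z)`; for nonempty `z` this follows by splitting off the
one-letter block `[g y]` and collapsing `g [g y] = g y`.
-/

namespace List

variable {α : Type*} {g : List α → α}

theorem apply_apply_cons_eq_apply_append
    (idem : ∀ x : List α, x ≠ [] → g [g x] = g x)
    (pair : ∀ x y : List α, x ≠ [] → y ≠ [] → g [g x, g y] = g (x ++ y))
    {y : List α} (hy : y ≠ []) (z : List α) : g (g y :: z) = g (y ++ z) := by
  rcases eq_or_ne z [] with rfl | hz
  · simpa using idem y hy
  calc g (g y :: z) = g [g [g y], g z] := (pair [g y] z (cons_ne_nil _ _) hz).symm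
    _ = g [g y, g z] := by rw [idem y hy]
    _ = g (y ++ z) := pair y z hy hz

theorem apply_append_apply_cons_eq_apply_append
    (idem : ∀ x : List α, x ≠ [] → g [g x] = g x)
    (pair : ∀ x y : List α, x ≠ [] → y ≠ [] → g [g x, g y] = g (x ++ y))
    (x : List α) {y : List α} (hy : y ≠ []) (z : List α) :
    g (x ++ g y :: z) = g (x ++ y ++ z) := by
  rcases eq_or_ne x [] with rfl | hx
  · exact apply_apply_cons_eq_apply_append idem pair hy z
  calc g (x ++ g y :: z) = g [g x, g (g y :: z)] := (pair x _ hx (cons_ne_nil _ _)).symm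
    _ = g [g x, g (y ++ z)] := by rw [apply_apply_cons_eq_apply_append idem pair hy z]
    _ = g (x ++ (y ++ z)) := pair x _ hx (append_ne_nil_of_left_ne_nil hy z)
    _ = g (x ++ y ++ z) := by rw [append_assoc]

end List

theorem stmt_9_general {α : Type*} (g : List α → α) :
    (∀ x y z : List α, y ≠ [] → g (x ++ g y :: z) = g (x ++ y ++ z)) ↔
    ((∀ x : List α, x ≠ [] → g [g x] = g x) ∧
      ∀ x y : List α, x ≠ [] → y ≠ [] → g [g x, g y] = g (x ++ y)) := by
  refine ⟨fun H => ⟨fun x hx => by simpa using H [] x [] hx, fun x y hx hy => ?_⟩,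
    fun ⟨idem, pair⟩ x y z hy => List.apply_append_apply_cons_eq_apply_append idem pair x hy z⟩
  calc g [g x, g y] = g (x ++ [g y]) := by simpa using H [] x [g y] hx
    _ = g (x ++ y) := by simpa using H x y [] hy

/-- Proposition 2.2, (iii) ⟺ (iv): a function `g : I* → I` on nonempty strings
satisfies `g(x g(y) z) = g(x y z)` for all strings `x, z` (possibly empty) and
nonempty `y`, if and only if it satisfies `g(g(x) g(y)) = g(x y)` for all nonempty
strings `x, y` together with `g₁ ∘ g = g`. -/
theorem stmt_9 {α : Type*} [Nonempty α] (g : List α → α) :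
    (∀ x y z : List α, y ≠ [] → g (x ++ g y :: z) = g (x ++ y ++ z)) ↔
    ((∀ x : List α, x ≠ [] → g [g x] = g x) ∧
      ∀ x y : List α, x ≠ [] → y ≠ [] → g [g x, g y] = g (x ++ y)) :=
  stmt_9_general g
end

section
/- Let f : Iⁿ → I be an associative n-ary operation, and define g on strings of length m ≡ 1 (mod n-1) by left-nested iteration: gₙ = f and g_m(x₁⋯x_m) = f(g_{m-n+1}(x₁⋯x_{m-n+1}), x_{m-n+2}, …, x_m). Then g(g(x₁)⋯g(xₙ)) = g(x₁⋯xₙ) for all strings x₁, …, xₙ of lengths in Aₙ, where g₁ = id. -/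
/-!
Inside a string of length `≡ 1 (mod n - 1)`, a block of `n` consecutive letters can be replaced by
its value. This goes by induction on the length: a long prefix is contracted first by the
left-nested recursion, a long suffix is split off by it, and the case that remains, length
`2n - 1`, is associativity itself. A block of length `(n - 1) k + 1` is the left-nested
composite of `k` blocks of length `n`, so it can be replaced by its value too. Contracting
`x₁, …, xₙ` one after the other then gives the claim.
-/

section

variable {α : Type*}

namespace List

theorem exists_eq_append_length_left_s10 {l : List α} {m : ℕ} (h : m ≤ l.length) :
    ∃ l₁ l₂, l = l₁ ++ l₂ ∧ l₁.length = m :=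
  ⟨l.take m, l.drop m, (take_append_drop m l).symm, length_take_of_le h⟩

theorem exists_eq_append_length_right_s10 {l : List α} {m : ℕ} (h : m ≤ l.length) :
    ∃ l₁ l₂, l = l₁ ++ l₂ ∧ l₂.length = m :=
  ⟨l.take (l.length - m), l.drop (l.length - m), (take_append_drop _ l).symm, by
    rw [length_drop]; omega⟩

theorem natCast_length_flatten {R : Type*} [AddCommMonoidWithOne R] {L : List (List α)}
    (h : ∀ x ∈ L, (x.length : R) = 1) : (L.flatten.length : R) = L.length := by
  induction L with
  | nil => simp
  | cons x L ih =>
    rw [flatten_cons, length_append, length_cons, Nat.cast_add, h x mem_cons_self,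
      ih fun y hy => h y (mem_cons_of_mem x hy), Nat.cast_succ, add_comm]

end List

theorem ZMod.natCast_eq_one_of_pred (n : ℕ) (hn : n ≠ 0) : (n : ZMod (n - 1)) = 1 := by
  obtain ⟨m, rfl⟩ := Nat.exists_eq_succ_of_ne_zero hn
  rw [Nat.succ_sub_one, Nat.cast_succ, ZMod.natCast_self, zero_add]

theorem Nat.exists_eq_mul_add_one_of_natCast_eq_one {m k : ℕ} (hm : m ≠ 0)
    (h : (m : ZMod k) = 1) : ∃ j, m = k * j + 1 := by
  obtain ⟨j, hj⟩ := (ZMod.natCast_eq_zero_iff (m - 1) k).1 <| by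
    rw [Nat.cast_sub (Nat.one_le_iff_ne_zero.2 hm), h, Nat.cast_one, sub_self]
  exact ⟨j, by omega⟩

open List

def IsNAssociative_s10 (n : ℕ) (g : List α → α) : Prop :=
  ∀ x y z x' y' z' : List α, x ++ y ++ z = x' ++ y' ++ z' →
    y.length = n → y'.length = n → (x ++ y ++ z).length = 2 * n - 1 →
    g (x ++ g y :: z) = g (x' ++ g y' :: z')

-- Lengths `≡ 1 (mod n - 1)` are written as casts into `ZMod (n - 1)`, which turns the length
-- bookkeeping below into ring arithmetic.
def IsLeftNested (n : ℕ) (g : List α → α) : Prop :=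
  ∀ l r : List α, l ≠ [] → (l.length : ZMod (n - 1)) = 1 → r.length = n - 1 →
    g (l ++ r) = g (g l :: r)

variable {n : ℕ} {g : List α → α}

theorem IsLeftNested.apply_append (hrec : IsLeftNested n g) (hg1 : ∀ a, g [a] = a)
    {l : List α} (hl : l ≠ []) (hl1 : (l.length : ZMod (n - 1)) = 1) {r : List α}
    (hr : (r.length : ZMod (n - 1)) = 0) : g (l ++ r) = g (g l :: r) := by
  obtain ⟨k, hk⟩ := (ZMod.natCast_eq_zero_iff _ _).1 hr
  induction k generalizing r with
  | zero => rw [length_eq_zero_iff.1 (hk.trans (mul_zero _)), append_nil, hg1]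
  | succ k ih =>
    obtain ⟨r', s, rfl, hs⟩ := r.exists_eq_append_length_right_s10 (m := n - 1)
      (by rw [hk]; exact Nat.le_mul_of_pos_right _ k.succ_pos)
    have hr' : r'.length = (n - 1) * k := by
      rw [length_append, hs, Nat.mul_succ] at hk; omega
    have hr'0 : (r'.length : ZMod (n - 1)) = 0 := by
      rw [hr', Nat.cast_mul, ZMod.natCast_self, zero_mul]
    calc g (l ++ (r' ++ s)) = g (g (l ++ r') :: s) := by
          rw [← append_assoc]
          exact hrec _ _ (by simp [hl]) (by simp [hl1, hr'0]) hs
      _ = g (g (g l :: r') :: s) := by rw [ih hr'0 hr']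
      _ = g (g l :: (r' ++ s)) := (hrec _ _ (cons_ne_nil _ _) (by simp [hr'0]) hs).symm

theorem IsNAssociative_s10.apply_append_block_of_length_eq (hassoc : IsNAssociative_s10 n g)
    (hrec : IsLeftNested n g) (hn : n ≠ 0) {a b c : List α} (hb : b.length = n)
    (h : (a ++ b ++ c).length = 2 * n - 1) : g (a ++ b ++ c) = g (a ++ g b :: c) := by
  obtain ⟨p, s, hps, hp⟩ := (a ++ b ++ c).exists_eq_append_length_left_s10 (m := n) (by omega)
  have hs : s.length = n - 1 := by
    rw [hps, length_append, hp] at h; omega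
  calc g (a ++ b ++ c) = g (g p :: s) := by
        rw [hps]
        exact hrec p s (ne_nil_of_length_pos (by omega))
          (by rw [hp]; exact ZMod.natCast_eq_one_of_pred n hn) hs
    _ = g (a ++ g b :: c) := hassoc [] p s a b c (by rw [nil_append, hps]) hp hb (by
        rw [nil_append, ← hps, h])

theorem IsNAssociative_s10.apply_append_block (hassoc : IsNAssociative_s10 n g)
    (hrec : IsLeftNested n g) (hg1 : ∀ a, g [a] = a) (hn : 2 ≤ n) {b : List α}
    (hb : b.length = n) {a c : List α} (h : ((a ++ b ++ c).length : ZMod (n - 1)) = 1) :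
    g (a ++ b ++ c) = g (a ++ g b :: c) := by
  have hn1 := ZMod.natCast_eq_one_of_pred n (by omega)
  induction hN : a.length + c.length using Nat.strong_induction_on generalizing a c with
  | _ N ih =>
  simp only [length_append, Nat.cast_add, hb, hn1] at h
  by_cases ha : n ≤ a.length
  · obtain ⟨m, a', rfl, hm⟩ := a.exists_eq_append_length_left_s10 ha
    have hm0 : m ≠ [] := ne_nil_of_length_pos (by omega)
    have hm1 : (m.length : ZMod (n - 1)) = 1 := hm ▸ hn1
    rw [length_append] at hN
    rw [length_append, Nat.cast_add, hm1] at h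
    calc g (m ++ a' ++ b ++ c) = g (g m :: (a' ++ b ++ c)) := by
          rw [append_assoc, append_assoc, ← append_assoc a']
          refine hrec.apply_append hg1 hm0 hm1 ?_
          simp only [length_append, Nat.cast_add, hb, hn1]
          linear_combination h
      _ = g (g m :: (a' ++ g b :: c)) := by
          refine ih (a'.length + 1 + c.length) (by omega) (a := g m :: a') ?_ (by simp)
          simp only [length_append, length_cons, Nat.cast_add, Nat.cast_one, hb, hn1]
          linear_combination h
      _ = g (m ++ a' ++ g b :: c) := by
          rw [append_assoc]
          refine (hrec.apply_append hg1 hm0 hm1 ?_).symm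
          simp only [length_append, length_cons, Nat.cast_add, Nat.cast_one]
          linear_combination h
  by_cases hc : n - 1 ≤ c.length
  · obtain ⟨c', s, rfl, hs⟩ := c.exists_eq_append_length_right_s10 hc
    have hs0 : (s.length : ZMod (n - 1)) = 0 := by rw [hs, ZMod.natCast_self]
    rw [length_append] at hN
    rw [length_append, Nat.cast_add, hs0, add_zero] at h
    calc g (a ++ b ++ (c' ++ s)) = g (g (a ++ b ++ c') :: s) := by
          rw [← append_assoc]
          refine hrec _ s (by simp [ne_nil_of_length_pos (by omega : 0 < b.length)]) ?_ hs
          simp only [length_append, Nat.cast_add, hb, hn1]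
          linear_combination h
      _ = g (g (a ++ g b :: c') :: s) := by
          rw [ih _ (by omega) ?_ rfl]
          simp only [length_append, Nat.cast_add, hb, hn1]
          linear_combination h
      _ = g (a ++ g b :: (c' ++ s)) := by
          rw [← cons_append, ← append_assoc]
          refine (hrec _ s (by simp) ?_ hs).symm
          simp only [length_append, length_cons, Nat.cast_add, Nat.cast_one]
          linear_combination h
  -- Otherwise `|a| + |c|` is a multiple of `n - 1` below `2 (n - 1)`.
  obtain ⟨k, hk⟩ := (ZMod.natCast_eq_zero_iff (a.length + c.length) (n - 1)).1 <| by
    rw [Nat.cast_add]; linear_combination h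
  have hk2 : k < 2 := Nat.lt_of_mul_lt_mul_left (a := n - 1) (by omega)
  interval_cases k
  · rw [length_eq_zero_iff.1 (by omega : a.length = 0),
      length_eq_zero_iff.1 (by omega : c.length = 0)]
    simp only [nil_append, append_nil, hg1]
  · exact hassoc.apply_append_block_of_length_eq hrec (by omega) hb (by
      simp only [length_append]; omega)

theorem IsNAssociative_s10.apply_append_of_natCast_length_eq_one (hassoc : IsNAssociative_s10 n g)
    (hrec : IsLeftNested n g) (hg1 : ∀ a, g [a] = a) (hn : 2 ≤ n) {b : List α}
    (hb : b ≠ []) (hb1 : (b.length : ZMod (n - 1)) = 1) {a c : List α}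
    (h : ((a ++ b ++ c).length : ZMod (n - 1)) = 1) :
    g (a ++ b ++ c) = g (a ++ g b :: c) := by
  obtain ⟨k, hk⟩ := Nat.exists_eq_mul_add_one_of_natCast_eq_one (length_pos_iff.2 hb).ne' hb1
  induction k generalizing b c with
  | zero =>
    obtain ⟨x, rfl⟩ := length_eq_one_iff.1 hk
    rw [hg1, append_assoc, singleton_append]
  | succ k ih =>
    obtain ⟨b', s, rfl, hs⟩ := b.exists_eq_append_length_right_s10 (m := n - 1) (by
      rw [hk, Nat.mul_succ]; omega)
    have hb' : b'.length = (n - 1) * k + 1 := by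
      rw [length_append, hs, Nat.mul_succ] at hk; omega
    have hb'0 : b' ≠ [] := ne_nil_of_length_pos (by omega)
    have hb'1 : (b'.length : ZMod (n - 1)) = 1 := by
      rw [hb', Nat.cast_succ, Nat.cast_mul, ZMod.natCast_self, zero_mul, zero_add]
    have hs0 : (s.length : ZMod (n - 1)) = 0 := by rw [hs, ZMod.natCast_self]
    calc g (a ++ (b' ++ s) ++ c) = g (a ++ b' ++ (s ++ c)) := by simp only [append_assoc]
      _ = g (a ++ g b' :: (s ++ c)) := ih hb'0 hb'1 (by simpa only [append_assoc] using h) hb'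
      _ = g (a ++ (g b' :: s) ++ c) := by simp only [append_assoc, cons_append]
      _ = g (a ++ g (g b' :: s) :: c) := by
          refine hassoc.apply_append_block hrec hg1 hn (by rw [length_cons, hs]; omega) ?_
          simp only [length_append, length_cons, Nat.cast_add, Nat.cast_one, hb'1, hs0] at h ⊢
          linear_combination h
      _ = g (a ++ g (b' ++ s) :: c) := by rw [hrec b' s hb'0 hb'1 hs]

theorem IsNAssociative_s10.apply_append_flatten (hassoc : IsNAssociative_s10 n g)
    (hrec : IsLeftNested n g) (hg1 : ∀ a, g [a] = a) (hn : 2 ≤ n) {L : List (List α)}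
    (hL : ∀ x ∈ L, x ≠ [] ∧ (x.length : ZMod (n - 1)) = 1) {a : List α}
    (h : ((a ++ L.flatten).length : ZMod (n - 1)) = 1) :
    g (a ++ L.flatten) = g (a ++ L.map g) := by
  induction L generalizing a with
  | nil => simp
  | cons x L ih =>
    obtain ⟨hx, hx1⟩ := hL x mem_cons_self
    calc g (a ++ (x :: L).flatten) = g (a ++ x ++ L.flatten) := by
          rw [flatten_cons, append_assoc]
      _ = g (a ++ [g x] ++ L.flatten) := by
          rw [hassoc.apply_append_of_natCast_length_eq_one hrec hg1 hn hx hx1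
            (by rwa [append_assoc, ← flatten_cons])]
          simp
      _ = g (a ++ [g x] ++ L.map g) := by
          refine ih (fun y hy => hL y (mem_cons_of_mem x hy)) ?_
          simp only [flatten_cons, length_append, length_singleton, Nat.cast_add,
            Nat.cast_one] at h ⊢
          rw [hx1] at h
          linear_combination h
      _ = g (a ++ (x :: L).map g) := by simp

end

theorem stmt_10_general {α : Type*} (n : ℕ) (hn : 2 ≤ n) (g : List α → α)
    -- the restriction of g to length-n strings (= f) is associative
    (hassoc : ∀ x y z x' y' z' : List α, x ++ y ++ z = x' ++ y' ++ z' →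
      y.length = n → y'.length = n → (x ++ y ++ z).length = 2 * n - 1 →
      g (x ++ g y :: z) = g (x' ++ g y' :: z'))
    -- g₁ = id
    (hg1 : ∀ a : α, g [a] = a)
    -- left-nested recursion (4)
    (hrec : ∀ l r : List α, l ≠ [] → l.length % (n - 1) = 1 % (n - 1) →
      r.length = n - 1 → g (l ++ r) = g (g l :: r)) :
    ∀ l : Fin n → List α, (∀ i, l i ≠ []) →
      (∀ i, (l i).length % (n - 1) = 1 % (n - 1)) →
      g (List.ofFn fun i => g (l i)) = g (List.flatten (List.ofFn l)) := by
  have cast_iff (m : ℕ) : (m : ZMod (n - 1)) = 1 ↔ m % (n - 1) = 1 % (n - 1) := by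
    rw [← ZMod.natCast_eq_natCast_iff', Nat.cast_one]
  have hrec' : IsLeftNested n g := fun l r hl hl1 hr => hrec l r hl ((cast_iff _).1 hl1) hr
  intro l hl hl1
  have hL : ∀ x ∈ List.ofFn l, x ≠ [] ∧ (x.length : ZMod (n - 1)) = 1 := by
    simp only [List.forall_mem_ofFn_iff, cast_iff]
    exact fun i => ⟨hl i, hl1 i⟩
  have hlen : ((List.ofFn l).flatten.length : ZMod (n - 1)) = 1 := by
    rw [List.natCast_length_flatten fun x hx => (hL x hx).2, List.length_ofFn,
      ZMod.natCast_eq_one_of_pred n (by omega)]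
  simpa only [List.nil_append, List.map_ofFn, Function.comp_def] using
    (IsNAssociative_s10.apply_append_flatten hassoc hrec' hg1 hn hL (a := []) hlen).symm

/-- Proposition 2.5, (i) ⟹ (iv) for the `n`-associative extension: if `g` restricted
to length-`n` strings is an associative `n`-ary operation `f`, `g₁ = id`, and `g` is
defined on strings of length `≡ 1 (mod n-1)` by the left-nested recursion
`g_m(x₁⋯x_m) = f(g_{m-n+1}(x₁⋯x_{m-n+1}), x_{m-n+2}, …, x_m)`, then
`g(g(x₁)⋯g(xₙ)) = g(x₁⋯xₙ)` for all strings `x₁, …, xₙ` of lengths in `Aₙ`. -/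
theorem stmt_10 {α : Type*} [Nonempty α] (n : ℕ) (hn : 2 ≤ n) (g : List α → α)
    -- the restriction of g to length-n strings (= f) is associative
    (hassoc : ∀ x y z x' y' z' : List α, x ++ y ++ z = x' ++ y' ++ z' →
      y.length = n → y'.length = n → (x ++ y ++ z).length = 2 * n - 1 →
      g (x ++ g y :: z) = g (x' ++ g y' :: z'))
    -- g₁ = id
    (hg1 : ∀ a : α, g [a] = a)
    -- left-nested recursion (4)
    (hrec : ∀ l r : List α, l ≠ [] → l.length % (n - 1) = 1 % (n - 1) →
      r.length = n - 1 → g (l ++ r) = g (g l :: r)) :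
    ∀ l : Fin n → List α, (∀ i, l i ≠ []) →
      (∀ i, (l i).length % (n - 1) = 1 % (n - 1)) →
      g (List.ofFn fun i => g (l i)) = g (List.flatten (List.ofFn l)) :=
  stmt_10_general n hn g hassoc hg1 hrec
end

section
/- Let n ≥ 2 and S = {(p-q)/k : k, p, q+1 ∈ Aₙ} where Aₙ = {m ∈ ℕ : m ≡ 1 (mod n-1)}. Then any two elements r, r' of S admit representations with a common denominator and common subtrahend: there exist k, p, p', q with k, p, p', q+1 ∈ Aₙ such that r = (p-q)/k and r' = (p'-q)/k. -/
/-!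
Bring both fractions to the denominator `k k'`: from `r = (p - q)/k` and `r' = (p' - q')/k'`,
`r = ((p k' + q' k) - (q k' + q' k))/(k k')` and `r' = ((p' k + q k') - (q k' + q' k))/(k k')`,
with the common subtrahend `q k' + q' k`. Products and sums preserve the congruences modulo `n - 1`.
-/

/-- `(k, p, q)` represents `r = (p - q)/k` as an element of `S`, with modulus `m = n - 1`. -/
def IsRepr (m : ℕ) (r : ℝ) (k p q : ℕ) : Prop :=
  1 ≤ k ∧ 1 ≤ p ∧ k ≡ 1 [MOD m] ∧ p ≡ 1 [MOD m] ∧ q ≡ 0 [MOD m] ∧ r = ((p : ℝ) - q) / k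

theorem sub_div_eq_add_sub_add_div_mul {K : Type*} [Field K] {k' : K} (hk' : k' ≠ 0)
    (p q k q' : K) : (p - q) / k = ((p * k' + q' * k) - (q * k' + q' * k)) / (k * k') := by
  rw [add_sub_add_right_eq_sub, ← sub_mul, mul_div_mul_right _ _ hk']

namespace IsRepr

variable {m : ℕ} {r r' : ℝ} {k p q k' p' q' : ℕ}

theorem mul_right (h : IsRepr m r k p q) (h' : IsRepr m r' k' p' q') :
    IsRepr m r (k * k') (p * k' + q' * k) (q * k' + q' * k) := by
  obtain ⟨hk, hp, hkm, hpm, hqm, rfl⟩ := h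
  obtain ⟨hk', -, hkm', -, hqm', -⟩ := h'
  refine ⟨Nat.one_le_iff_ne_zero.mpr (by positivity),
    le_add_right (Nat.one_le_iff_ne_zero.mpr (by positivity)), ?_, ?_, ?_, ?_⟩
  · simpa using hkm.mul hkm'
  · simpa using (hpm.mul hkm').add (hqm'.mul hkm)
  · simpa using (hqm.mul hkm').add (hqm'.mul hkm)
  · have hk'0 : (k' : ℝ) ≠ 0 := by exact_mod_cast Nat.one_le_iff_ne_zero.mp hk'
    push_cast
    exact sub_div_eq_add_sub_add_div_mul hk'0 _ _ _ _

theorem mul_left (h : IsRepr m r k p q) (h' : IsRepr m r' k' p' q') :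
    IsRepr m r' (k * k') (p' * k + q * k') (q * k' + q' * k) := by
  simpa only [mul_comm k', add_comm (q' * k)] using h'.mul_right h

end IsRepr

theorem stmt_12_general (n : ℕ) (r r' : ℝ)
    (hr : ∃ k p q : ℕ, 1 ≤ k ∧ 1 ≤ p ∧
      k % (n - 1) = 1 % (n - 1) ∧ p % (n - 1) = 1 % (n - 1) ∧ q % (n - 1) = 0 ∧
      r = ((p : ℝ) - (q : ℝ)) / (k : ℝ))
    (hr' : ∃ k p q : ℕ, 1 ≤ k ∧ 1 ≤ p ∧
      k % (n - 1) = 1 % (n - 1) ∧ p % (n - 1) = 1 % (n - 1) ∧ q % (n - 1) = 0 ∧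
      r' = ((p : ℝ) - (q : ℝ)) / (k : ℝ)) :
    ∃ k p p' q : ℕ, 1 ≤ k ∧ 1 ≤ p ∧ 1 ≤ p' ∧
      k % (n - 1) = 1 % (n - 1) ∧ p % (n - 1) = 1 % (n - 1) ∧
      p' % (n - 1) = 1 % (n - 1) ∧ q % (n - 1) = 0 ∧
      r = ((p : ℝ) - (q : ℝ)) / (k : ℝ) ∧ r' = ((p' : ℝ) - (q : ℝ)) / (k : ℝ) := by
  obtain ⟨k, p, q, h⟩ := hr
  obtain ⟨k', p', q', h'⟩ := hr'
  obtain ⟨hk, hp, hkm, hpm, hqm, hr⟩ := IsRepr.mul_right (m := n - 1) h h'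
  obtain ⟨-, hp', -, hpm', -, hr'⟩ := IsRepr.mul_left (m := n - 1) h h'
  exact ⟨_, _, _, _, hk, hp, hp', hkm, hpm, hpm', hqm, hr, hr'⟩

/-- Claim 6: any two elements `r, r'` of `S = {(p-q)/k : k, p, q+1 ∈ Aₙ}` admit
representations with a common denominator `k` and common subtrahend `q`. -/
theorem stmt_12 (n : ℕ) (hn : 2 ≤ n) (r r' : ℝ)
    (hr : ∃ k p q : ℕ, 1 ≤ k ∧ 1 ≤ p ∧
      k % (n - 1) = 1 % (n - 1) ∧ p % (n - 1) = 1 % (n - 1) ∧ q % (n - 1) = 0 ∧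
      r = ((p : ℝ) - (q : ℝ)) / (k : ℝ))
    (hr' : ∃ k p q : ℕ, 1 ≤ k ∧ 1 ≤ p ∧
      k % (n - 1) = 1 % (n - 1) ∧ p % (n - 1) = 1 % (n - 1) ∧ q % (n - 1) = 0 ∧
      r' = ((p : ℝ) - (q : ℝ)) / (k : ℝ)) :
    ∃ k p p' q : ℕ, 1 ≤ k ∧ 1 ≤ p ∧ 1 ≤ p' ∧
      k % (n - 1) = 1 % (n - 1) ∧ p % (n - 1) = 1 % (n - 1) ∧
      p' % (n - 1) = 1 % (n - 1) ∧ q % (n - 1) = 0 ∧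
      r = ((p : ℝ) - (q : ℝ)) / (k : ℝ) ∧ r' = ((p' : ℝ) - (q : ℝ)) / (k : ℝ) :=
  stmt_12_general n r r' hr hr'
end

section
/- In the setting of the Main Theorem's proof with φ(x) = inf S_x, if g(c^p) = g(x^k c^q) for some k, p, q+1 ∈ Aₙ, then φ(x) = (p-q)/k; in particular φ(c) = 1. -/
/-- The set `S_x`: rationals `(p-q)/k` with `k, p, q+1 ∈ Aₙ` such that
`g(c^p) > g(x^k c^q)`. -/
def SxSet (n : ℕ) (g : List ℝ → ℝ) (c x : ℝ) : Set ℝ :=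
  {r | ∃ k p q : ℕ, 1 ≤ k ∧ 1 ≤ p ∧
    k % (n - 1) = 1 % (n - 1) ∧ p % (n - 1) = 1 % (n - 1) ∧ q % (n - 1) = 0 ∧
    r = ((p : ℝ) - (q : ℝ)) / (k : ℝ) ∧
    g (List.replicate k x ++ List.replicate q c) < g (List.replicate p c)}

/-- The set `S = {(p-q)/k : k, p, q+1 ∈ Aₙ}`. -/
def Sset (n : ℕ) : Set ℝ :=
  {r | ∃ k p q : ℕ, 1 ≤ k ∧ 1 ≤ p ∧
    k % (n - 1) = 1 % (n - 1) ∧ p % (n - 1) = 1 % (n - 1) ∧ q % (n - 1) = 0 ∧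
    r = ((p : ℝ) - (q : ℝ)) / (k : ℝ)}

/-!
By continuity and cancellativity, `f` is strictly monotone in each argument, in the same direction
on all of `Iⁿ`; it cannot be decreasing, because associativity writes a composite of two such
decreasing maps, which is increasing, as a single decreasing one. Hence `g` is strictly
increasing in its first argument, and symmetry plus associativity make `g` invariant under
permutations of its arguments. Therefore a relation `g(x^k c^q) = g(c^p)` (or `<`) persists when
the word is replaced by its `M`-th power and padded with `c`'s. Since `g(c^m)` increases with
`m ∈ Aₙ` (as `c < g(c^n)`), raising `g(x^k c^q) = g(c^p)` to the power `k'` and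
`g(x^k' c^q') < g(c^p')` to the power `k` gives `(p - q)/k < (p' - q')/k'`, while the members
`(pM + n - 1 - qM)/(kM)` of `S_x` tend to `(p - q)/k`.
-/

open List (replicate)

theorem Nat.modEq_one_iff_dvd_sub_one {m N : ℕ} (hN : N ≠ 0) :
    N ≡ 1 [MOD m] ↔ m ∣ N - 1 := by
  rw [Nat.ModEq.comm]
  exact Nat.modEq_iff_dvd' (Nat.one_le_iff_ne_zero.mpr hN)

theorem List.induction_of_dvd_length {α : Type*} {m : ℕ} {P : List α → Prop} (nil : P [])
    (append : ∀ r b : List α, m ∣ r.length → b.length = m → P r → P (r ++ b)) :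
    ∀ r : List α, m ∣ r.length → P r := by
  intro r hr
  induction hN : r.length using Nat.strong_induction_on generalizing r with
  | _ N ih =>
    obtain rfl | hpos := N.eq_zero_or_pos
    · rwa [List.length_eq_zero_iff.mp hN]
    have hm : 0 < m := Nat.pos_of_dvd_of_pos (hN ▸ hr) hpos
    have hmN : m ≤ N := Nat.le_of_dvd hpos (hN ▸ hr)
    have hdvd : m ∣ (r.take (N - m)).length := by
      simpa [hN] using Nat.dvd_sub (hN ▸ hr) (dvd_refl m)
    rw [← List.take_append_drop (N - m) r]
    exact append _ _ hdvd (by simp [hN]; omega) (ih _ (by simp [hN]; omega) _ hdvd rfl)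

theorem List.length_cons_modEq_one {α : Type*} {m : ℕ} (a : α) {r : List α}
    (hr : m ∣ r.length) : (a :: r).length ≡ 1 [MOD m] := by
  simpa using (Nat.modEq_zero_iff_dvd.mpr hr).add_right 1

theorem List.length_append_modEq_one {α : Type*} {m : ℕ} {l r : List α}
    (hl : l.length ≡ 1 [MOD m]) (hr : m ∣ r.length) : (l ++ r).length ≡ 1 [MOD m] := by
  simpa using hl.add (Nat.modEq_zero_iff_dvd.mpr hr)

theorem List.length_flatten_replicate_append_modEq {α : Type*} {m j a : ℕ} {Z R : List α}
    (hZ : Z.length ≡ 1 [MOD m]) (h : j + R.length ≡ a [MOD m]) :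
    ((replicate j Z).flatten ++ R).length ≡ a [MOD m] := by
  simpa using ((hZ.mul_left j).add_right R.length).trans (by simpa using h)

theorem List.forall_mem_flatten_replicate {α : Type*} {p : α → Prop} {Z : List α}
    (h : ∀ z ∈ Z, p z) (j : ℕ) : ∀ z ∈ (replicate j Z).flatten, p z := by
  simpa using fun z _ hz => h z hz

theorem List.forall_mem_replicate_append_replicate {α : Type*} {p : α → Prop} {x c : α}
    (hx : p x) (hc : p c) (k q : ℕ) : ∀ z ∈ replicate k x ++ replicate q c, p z := by
  simp only [List.forall_mem_append, List.forall_mem_replicate]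
  exact ⟨.inr hx, .inr hc⟩

theorem List.getD_mem_of_forall_mem {α : Type*} {I : Set α} {l : List α} (h : ∀ z ∈ l, z ∈ I)
    {i : ℕ} (hi : i < l.length) {d : α} : l.getD i d ∈ I := by
  rw [List.getD_eq_getElem _ _ hi]
  exact h _ (List.getElem_mem _)

theorem List.getD_append_cons_cons_comm {α : Type*} (w v : List α) (x y d : α) {i : ℕ}
    (hi : i ≠ w.length) (hi' : i ≠ w.length + 1) :
    (w ++ x :: y :: v).getD i d = (w ++ y :: x :: v).getD i d := by
  rcases lt_or_ge i w.length with h | h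
  · rw [List.getD_append _ _ _ _ h, List.getD_append _ _ _ _ h]
  · obtain ⟨k, rfl⟩ : ∃ k, i = w.length + (k + 2) := ⟨i - w.length - 2, by omega⟩
    rw [List.getD_append_right _ _ _ _ h, List.getD_append_right _ _ _ _ h]
    simp only [Nat.add_sub_cancel_left, List.getD_cons_succ]

theorem List.flatten_replicate_append_replicate_perm {α : Type*} (M k q s : ℕ) (x c : α) :
    ((replicate M (replicate k x ++ replicate q c)).flatten ++ replicate s c).Perm
      (replicate (M * k) x ++ replicate (M * q + s) c) := by
  classical
  refine List.perm_iff_count.mpr fun a => ?_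
  simp only [List.count_append, List.count_flatten, List.map_replicate, List.sum_replicate,
    List.count_replicate, smul_eq_mul]
  split_ifs <;> ring

theorem List.flatten_replicate_replicate_append_replicate {α : Type*} (M p s : ℕ) (c : α) :
    (replicate M (replicate p c)).flatten ++ replicate s c = replicate (M * p + s) c := by
  rw [List.flatten_replicate_replicate, List.replicate_append_replicate]

theorem CancOn.strictMonoOn_or_strictAntiOn {n : ℕ} {I : Set ℝ} {f : (Fin n → ℝ) → ℝ}
    (hcanc : CancOn n I f) (hI : I.OrdConnected) (hcont : ContinuousOn f {x | ∀ i, x i ∈ I})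
    (k : Fin n) :
    (∀ v : Fin n → ℝ, (∀ i, v i ∈ I) →
      StrictMonoOn (fun t => f (Function.update v k t)) I) ∨
    (∀ v : Fin n → ℝ, (∀ i, v i ∈ I) →
      StrictAntiOn (fun t => f (Function.update v k t)) I) := by
  set S : Set ((Fin n → ℝ) × ℝ × ℝ) := (Set.univ.pi fun _ => I) ×ˢ
    ((I ×ˢ I) ∩ {p | (LinearMap.fst ℝ ℝ ℝ - LinearMap.snd ℝ ℝ ℝ) p < 0})
  set D : (Fin n → ℝ) × ℝ × ℝ → ℝ :=
    fun s => f (Function.update s.1 k s.2.2) - f (Function.update s.1 k s.2.1)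
  have mem_S {v a b} : (v, a, b) ∈ S ↔ (∀ i, v i ∈ I) ∧ a ∈ I ∧ b ∈ I ∧ a < b := by
    simp [S, and_assoc]
  have update_mem {v : Fin n → ℝ} (hv : ∀ i, v i ∈ I) {t : ℝ} (ht : t ∈ I) (i : Fin n) :
      Function.update v k t i ∈ I := by
    rcases eq_or_ne i k with rfl | hi
    · simpa
    · simpa [hi] using hv i
  have hD_ne : ∀ s ∈ S, D s ≠ 0 := by
    rintro ⟨v, a, b⟩ hs hD
    obtain ⟨hv, ha, hb, hab⟩ := mem_S.mp hs
    have := hcanc k _ _ (update_mem hv hb) (update_mem hv ha)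
      (fun i hi => by simp [hi]) (sub_eq_zero.mp hD)
    simp only [Function.update_self] at this
    exact hab.ne' this
  have hS : IsPreconnected S := by
    have hIc : Convex ℝ I := convex_iff_ordConnected.mpr hI
    exact (Convex.prod (convex_pi fun _ _ => hIc) ((hIc.prod hIc).inter
      (convex_halfSpace_lt (LinearMap.isLinear _) 0))).isPreconnected
  have hD_cont : ContinuousOn D S := by
    have h (sel : (Fin n → ℝ) × ℝ × ℝ → ℝ) (hsel : Continuous sel)
        (hselI : ∀ s ∈ S, sel s ∈ I) :
        ContinuousOn (fun s => f (Function.update s.1 k (sel s))) S :=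
      hcont.comp (by fun_prop) fun s hs => update_mem (mem_S.mp hs).1 (hselI s hs)
    exact (h _ (by fun_prop) fun s hs => (mem_S.mp hs).2.2.1).sub
      (h _ (by fun_prop) fun s hs => (mem_S.mp hs).2.1)
  have hsign : (∀ s ∈ S, 0 < D s) ∨ (∀ s ∈ S, D s < 0) := by
    by_contra! ⟨⟨s, hs, hs0⟩, ⟨s', hs', hs'0⟩⟩
    obtain ⟨x, hx, hx0⟩ := hS.intermediate_value₂ hs hs' hD_cont continuousOn_const hs0 hs'0
    exact hD_ne x hx hx0
  refine hsign.imp (fun h v hv a ha b hb hab => ?_) (fun h v hv a ha b hb hab => ?_)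
  · exact sub_pos.mp (h (v, a, b) (mem_S.mpr ⟨hv, ha, hb, hab⟩))
  · exact sub_neg.mp (h (v, a, b) (mem_S.mpr ⟨hv, ha, hb, hab⟩))

structure IsNAryExtension (n : ℕ) (f : (Fin n → ℝ) → ℝ) (g : List ℝ → ℝ) : Prop where
  apply_singleton (a : ℝ) : g [a] = a
  apply_of_length_eq (l : List ℝ) (hl : l.length = n) :
    g l = f (fun i : Fin n => l.getD i 0)
  apply_append_block (l b : List ℝ) (hl : l ≠ []) (hl' : l.length ≡ 1 [MOD n - 1])
    (hb : b.length = n - 1) : g (l ++ b) = g (g l :: b)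

-- Words over `I` whose length lies in `Aₙ`.
structure IsAdmissible (n : ℕ) (I : Set ℝ) (l : List ℝ) : Prop where
  ne_nil : l ≠ []
  length_modEq : l.length ≡ 1 [MOD n - 1]
  forall_mem : ∀ z ∈ l, z ∈ I

theorem IsAdmissible.replicate_append_replicate {n : ℕ} {I : Set ℝ} {x c : ℝ} (hx : x ∈ I)
    (hc : c ∈ I) {k q : ℕ} (hk : k ≠ 0) (hk1 : k ≡ 1 [MOD n - 1])
    (hq : q ≡ 0 [MOD n - 1]) : IsAdmissible n I (replicate k x ++ replicate q c) where
  ne_nil := by simp [hk]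
  length_modEq := by simpa using hk1.add hq
  forall_mem := List.forall_mem_replicate_append_replicate hx hc k q

theorem IsAdmissible.replicate {n : ℕ} {I : Set ℝ} {c : ℝ} (hc : c ∈ I) {p : ℕ} (hp : p ≠ 0)
    (hp1 : p ≡ 1 [MOD n - 1]) : IsAdmissible n I (replicate p c) := by
  simpa using IsAdmissible.replicate_append_replicate hc hc hp hp1 (q := 0) rfl

namespace IsNAryExtension

variable {n : ℕ} {I : Set ℝ} {f : (Fin n → ℝ) → ℝ} {g : List ℝ → ℝ}
  (hg : IsNAryExtension n f g) (hn : 2 ≤ n) (hI : I.OrdConnected)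
  (hmap : Set.MapsTo f {x | ∀ i, x i ∈ I} I) (hcont : ContinuousOn f {x | ∀ i, x i ∈ I})
  (hsym : SymmOn n I f) (hcanc : CancOn n I f) (hassoc : NAssocOn n I f)
include hg

theorem apply_append_of_dvd {l : List ℝ} (hl : l ≠ []) (hl' : l.length ≡ 1 [MOD n - 1])
    {r : List ℝ} (hr : (n - 1) ∣ r.length) : g (l ++ r) = g (g l :: r) := by
  refine List.induction_of_dvd_length (P := fun r => g (l ++ r) = g (g l :: r)) ?_
    (fun r b hr hb ih => ?_) r hr
  · rw [List.append_nil, hg.apply_singleton]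
  · rw [← List.append_assoc, hg.apply_append_block _ _ (by simp [hl])
      (List.length_append_modEq_one hl' hr) hb, ih, ← List.cons_append,
      hg.apply_append_block _ _ (List.cons_ne_nil _ _) (List.length_cons_modEq_one _ hr) hb]

include hmap in
theorem apply_mem_of_length_eq {l : List ℝ} (hl : l.length = n) (hlI : ∀ z ∈ l, z ∈ I) :
    g l ∈ I := by
  rw [hg.apply_of_length_eq l hl]
  exact hmap fun i => List.getD_mem_of_forall_mem hlI (hl ▸ i.isLt)

include hn hmap in
theorem apply_cons_mem {a : ℝ} (ha : a ∈ I) {r : List ℝ} (hrI : ∀ z ∈ r, z ∈ I)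
    (hr : (n - 1) ∣ r.length) : g (a :: r) ∈ I := by
  revert hrI
  refine List.induction_of_dvd_length (P := fun r => (∀ z ∈ r, z ∈ I) → g (a :: r) ∈ I)
    (fun _ => by rwa [hg.apply_singleton]) (fun r b hr hb ih hrI => ?_) r hr
  simp only [List.forall_mem_append] at hrI
  rw [← List.cons_append, hg.apply_append_block _ _ (List.cons_ne_nil _ _)
    (List.length_cons_modEq_one _ hr) hb]
  exact hg.apply_mem_of_length_eq hmap (by simp [hb]; omega)
    (List.forall_mem_cons.mpr ⟨ih hrI.1, hrI.2⟩)

include hn hmap in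
theorem apply_mem {l : List ℝ} (hl : IsAdmissible n I l) : g l ∈ I := by
  obtain ⟨a, r, rfl⟩ := List.exists_cons_of_ne_nil hl.ne_nil
  exact hg.apply_cons_mem hn hmap (hl.forall_mem a (by simp))
    (fun z hz => hl.forall_mem z (by simp [hz]))
    ((Nat.modEq_one_iff_dvd_sub_one (by simp)).mp hl.length_modEq)

include hn in
theorem apply_cons_eq_update {r : List ℝ} (hr : r.length = n - 1) (s t : ℝ) :
    g (t :: r) = f (Function.update (fun i : Fin n => (s :: r).getD i 0) ⟨0, by omega⟩ t) := by
  rw [hg.apply_of_length_eq _ (by simp; omega)]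
  congr 1 with ⟨_ | i, hi⟩ <;> simp

-- The `n`-ary associativity of `f`, moving the inner block one place to the right.
include hn hassoc in
theorem apply_cons_append_cons {a e : ℝ} {D E : List ℝ} (hD : D.length = n - 1)
    (hE : E.length = n - 2) (hmem : ∀ z ∈ a :: D ++ e :: E, z ∈ I) :
    g (a :: D ++ e :: E) = g (a :: g (D ++ [e]) :: E) := by
  set x : ℕ → ℝ := fun j => (a :: D ++ e :: E).getD j 0
  have H := hassoc x (fun j hj => List.getD_mem_of_forall_mem hmem (by simp; omega)) 0 (by omega)
  have hx_lt (l : Fin n) : x l = (a :: D).getD l 0 :=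
    List.getD_append _ _ _ _ (by simp; omega)
  have hx_succ (l : Fin n) : x (1 + l) = (D ++ [e]).getD l 0 := by
    simp only [x]
    rw [Nat.add_comm, List.cons_append, List.getD_cons_succ, ← List.singleton_append,
      ← List.append_assoc, List.getD_append _ _ _ _ (by simp; omega)]
  have hx_ge (j : ℕ) : x (j + n) = (e :: E).getD j 0 := by
    simp only [x]
    rw [List.getD_append_right _ _ _ _ (by simp; omega)]
    congr 1
    simp; omega
  rw [hg.apply_append_block _ _ (List.cons_ne_nil _ _)
      (List.length_cons_modEq_one a (hD ▸ dvd_refl _)) (by simp; omega),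
    hg.apply_of_length_eq _ (by simp; omega), hg.apply_of_length_eq (a :: _ :: E) (by simp; omega),
    hg.apply_of_length_eq (a :: D) (by simp; omega),
    hg.apply_of_length_eq (D ++ [e]) (by simp; omega)]
  convert H using 2 <;> funext ⟨j, hj⟩
  · rcases j with _ | j
    · simp only [List.getD_cons_zero, hx_lt, lt_irrefl, if_false, if_true, zero_add]
    · rw [show j + 1 + n - 1 = j + n by omega]
      simp [hx_ge]
  · rcases j with _ | _ | j
    · rfl
    · simp only [List.getD_cons_succ, List.getD_cons_zero, lt_irrefl, if_false, if_true,
        zero_add, hx_succ]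
    · rw [show j + 1 + 1 + n - 1 = (j + 1) + n by omega]
      simp [hx_ge]

include hsym in
theorem apply_swap_of_length_eq {w v : List ℝ} {x y : ℝ} (hlen : (w ++ x :: y :: v).length = n)
    (hmem : ∀ z ∈ w ++ x :: y :: v, z ∈ I) : g (w ++ x :: y :: v) = g (w ++ y :: x :: v) := by
  have hw : w.length + 1 < n := by simp at hlen; omega
  rw [hg.apply_of_length_eq _ hlen, hg.apply_of_length_eq _ (by simpa using hlen),
    ← hsym _ (fun i => List.getD_mem_of_forall_mem hmem (hlen ▸ i.isLt))
      (Equiv.swap ⟨w.length, by omega⟩ ⟨w.length + 1, hw⟩)]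
  congr 1 with i
  simp only [Function.comp_apply, Equiv.swap_apply_def]
  split_ifs with h₁ h₂
  · subst h₁; simp
  · subst h₂; simp
  · exact List.getD_append_cons_cons_comm _ _ _ _ _ (fun h => h₁ (Fin.ext h))
      (fun h => h₂ (Fin.ext h))

include hn hI hcont hcanc in
theorem strictMonoOn_or_strictAntiOn_apply_cons :
    (∀ r : List ℝ, r.length = n - 1 → (∀ z ∈ r, z ∈ I) →
      StrictMonoOn (fun t => g (t :: r)) I) ∨
    (∀ r : List ℝ, r.length = n - 1 → (∀ z ∈ r, z ∈ I) →
      StrictAntiOn (fun t => g (t :: r)) I) := by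
  refine (hcanc.strictMonoOn_or_strictAntiOn hI hcont ⟨0, by omega⟩).imp
    (fun h r hr hrI a ha b hb hab => ?_) (fun h r hr hrI a ha b hb hab => ?_) <;>
  · simp only [hg.apply_cons_eq_update hn hr a]
    exact h _ (fun i => List.getD_mem_of_forall_mem (List.forall_mem_cons.mpr ⟨ha, hrI⟩)
      (by simp; omega)) ha hb hab

include hn hI hmap hcont hcanc hassoc in
theorem strictMonoOn_apply_cons_of_length_eq {r : List ℝ} (hr : r.length = n - 1)
    (hrI : ∀ z ∈ r, z ∈ I) : StrictMonoOn (fun t => g (t :: r)) I := by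
  intro a ha b hb hab
  rcases hg.strictMonoOn_or_strictAntiOn_apply_cons hn hI hcont hcanc with h | h
  · exact h r hr hrI ha hb hab
  exfalso
  have mem_replicate (m : ℕ) : ∀ z ∈ replicate m a, z ∈ I := by simp [ha]
  set φ := fun t => g (t :: replicate (n - 1) a)
  set ψ := fun t => g (t :: g (replicate n a) :: replicate (n - 2) a)
  have hφ : StrictAntiOn φ I := h _ (by simp) (mem_replicate _)
  have hψ : StrictAntiOn ψ I := h _ (by simp; omega) (List.forall_mem_cons.mpr
    ⟨hg.apply_mem_of_length_eq hmap (by simp) (mem_replicate _), mem_replicate _⟩)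
  have hφ_mem : Set.MapsTo φ I I := fun t ht => hg.apply_mem_of_length_eq hmap
    (by simp; omega) (List.forall_mem_cons.mpr ⟨ht, mem_replicate _⟩)
  have hφφ : ∀ t ∈ I, φ (φ t) = ψ t := by
    intro t ht
    have hsplit : replicate (n - 1) a = a :: replicate (n - 2) a := by
      rw [← List.replicate_succ]; congr 1; omega
    have hblock : replicate (n - 1) a ++ [a] = replicate n a := by
      rw [← List.replicate_succ']; congr 1; omega
    simp only [φ, ψ]
    rw [← hg.apply_append_block _ _ (List.cons_ne_nil _ _)
        (List.length_cons_modEq_one _ (by simp)) (by simp),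
      congrArg (t :: replicate (n - 1) a ++ ·) hsplit,
      hg.apply_cons_append_cons hn hassoc (by simp) (by simp), hblock]
    simp only [List.forall_mem_cons, List.forall_mem_append]
    exact ⟨⟨ht, mem_replicate _⟩, ha, mem_replicate _⟩
  have := (hφ.comp hφ hφ_mem) ha hb hab
  simp only [Function.comp_apply, hφφ a ha, hφφ b hb] at this
  exact (hψ ha hb hab).not_gt this

include hn hI hmap hcont hcanc hassoc in
theorem strictMonoOn_apply_cons {r : List ℝ} (hr : (n - 1) ∣ r.length)
    (hrI : ∀ z ∈ r, z ∈ I) : StrictMonoOn (fun t => g (t :: r)) I := by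
  revert hrI
  refine List.induction_of_dvd_length
    (P := fun r => (∀ z ∈ r, z ∈ I) → StrictMonoOn (fun t => g (t :: r)) I)
    (fun _ a _ b _ hab => ?_) (fun r b hr hb ih hrI => ?_) r hr
  · simpa only [hg.apply_singleton] using hab
  · simp only [List.forall_mem_append] at hrI
    have hsplit (t : ℝ) : g (t :: (r ++ b)) = g (g (t :: r) :: b) :=
      hg.apply_append_block _ _ (List.cons_ne_nil _ _) (List.length_cons_modEq_one _ hr) hb
    simp only [hsplit]
    exact (hg.strictMonoOn_apply_cons_of_length_eq hn hI hmap hcont hcanc hassoc hb hrI.2).comp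
      (ih hrI.1) fun t ht => hg.apply_cons_mem hn hmap ht hrI.1 hr

include hn hI hmap hcont hcanc hassoc in
theorem apply_replicate_lt_apply_replicate_iff {c : ℝ} (hc : c ∈ I)
    (hcn : c < g (replicate n c)) {p p' : ℕ} (hp : p ≠ 0) (hp' : p' ≠ 0)
    (hp1 : p ≡ 1 [MOD n - 1]) (hp'1 : p' ≡ 1 [MOD n - 1]) :
    g (replicate p c) < g (replicate p' c) ↔ p < p' := by
  set u : ℕ → ℝ := fun j => g (c :: replicate (j * (n - 1)) c)
  have mem_replicate (m : ℕ) : ∀ z ∈ replicate m c, z ∈ I := by simp [hc]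
  have hu_succ (j : ℕ) : u (j + 1) = g (u j :: replicate (n - 1) c) := by
    show g (c :: replicate ((j + 1) * (n - 1)) c) = _
    rw [← hg.apply_append_block _ _ (List.cons_ne_nil _ _)
      (List.length_cons_modEq_one _ (by simp)) (by simp), List.cons_append,
      ← List.replicate_add, Nat.succ_mul]
  have hu : StrictMono u := by
    refine strictMono_nat_of_lt_succ fun j => ?_
    induction j with
    | zero =>
      have hn1 : n - 1 + 1 = n := by omega
      simpa [u, hg.apply_singleton, ← List.replicate_succ, hn1] using hcn
    | succ j ih =>
      rw [hu_succ j, hu_succ (j + 1)]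
      exact hg.strictMonoOn_apply_cons_of_length_eq hn hI hmap hcont hcanc hassoc (by simp)
        (mem_replicate _) (hg.apply_cons_mem hn hmap hc (mem_replicate _) (by simp))
        (hg.apply_cons_mem hn hmap hc (mem_replicate _) (by simp)) ih
  have hrepr {q : ℕ} (hq : q ≠ 0) (hq1 : q ≡ 1 [MOD n - 1]) : ∃ j, q = j * (n - 1) + 1 := by
    obtain ⟨j, hj⟩ := (Nat.modEq_one_iff_dvd_sub_one hq).mp hq1
    exact ⟨j, by rw [Nat.mul_comm]; omega⟩
  obtain ⟨j, rfl⟩ := hrepr hp hp1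
  obtain ⟨j', rfl⟩ := hrepr hp' hp'1
  exact hu.lt_iff_lt.trans (by rw [Nat.add_lt_add_iff_right, Nat.mul_lt_mul_right (by omega)])

include hn hmap hsym hassoc in
theorem apply_swap_of_length_add_two_eq {w v : List ℝ} {x y : ℝ} (hv : v.length + 2 = n)
    (hdvd : (n - 1) ∣ w.length + v.length + 1) (hmem : ∀ z ∈ w ++ x :: y :: v, z ∈ I) :
    g (w ++ x :: y :: v) = g (w ++ y :: x :: v) := by
  by_cases hw : w = []
  · subst hw
    exact hg.apply_swap_of_length_eq hsym (by simp; omega) hmem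
  simp only [List.forall_mem_append, List.forall_mem_cons] at hmem
  obtain ⟨hwI, hxI, hyI, hvI⟩ := hmem
  have hw_dvd : (n - 1) ∣ w.length :=
    Nat.dvd_add_self_right.mp (show w.length + v.length + 1 = w.length + (n - 1) by omega ▸ hdvd)
  have hw_ge : n - 1 ≤ w.length := Nat.le_of_dvd (List.length_pos_iff.mpr hw) hw_dvd
  -- Split `w = A ++ C` with `|C| = n - 2`; collapsing `A` leaves `2n - 1` letters, where `x, y`
  -- sit in the inner block of the associativity identity.
  rw [← List.take_append_drop (w.length - (n - 2)) w] at hwI ⊢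
  set A := w.take (w.length - (n - 2))
  set C := w.drop (w.length - (n - 2))
  have hA : A ≠ [] := List.ne_nil_of_length_pos (by simp [A]; omega)
  have hA' : A.length ≡ 1 [MOD n - 1] :=
    (Nat.modEq_one_iff_dvd_sub_one (List.length_pos_iff.mpr hA).ne').mpr (by
      simpa [A, show w.length - (n - 2) - 1 = w.length - (n - 1) by omega]
        using Nat.dvd_sub hw_dvd (dvd_refl _))
  have hC : C.length = n - 2 := by simp [C]; omega
  simp only [List.forall_mem_append] at hwI
  have hgA : g A ∈ I := hg.apply_mem hn hmap ⟨hA, hA', hwI.1⟩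
  have hcollapse (x y : ℝ) : g (A ++ C ++ x :: y :: v) = g (g A :: (C ++ [x]) ++ y :: v) := by
    rw [List.append_assoc, hg.apply_append_of_dvd hA hA' ⟨2, by simp; omega⟩]
    simp
  have hmem_inner (x y : ℝ) (hx : x ∈ I) (hy : y ∈ I) :
      ∀ z ∈ g A :: (C ++ [x]) ++ y :: v, z ∈ I := by
    simp only [List.forall_mem_append, List.forall_mem_cons]
    exact ⟨⟨hgA, hwI.2, hx, by simp⟩, hy, hvI⟩
  rw [hcollapse, hcollapse,
    hg.apply_cons_append_cons hn hassoc (by simp; omega) (by omega) (hmem_inner x y hxI hyI),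
    hg.apply_cons_append_cons hn hassoc (by simp; omega) (by omega) (hmem_inner y x hyI hxI)]
  simp only [List.append_assoc, List.singleton_append]
  rw [hg.apply_swap_of_length_eq hsym (by simp; omega) (by
    simp only [List.forall_mem_append, List.forall_mem_cons]
    exact ⟨hwI.2, hxI, hyI, by simp⟩)]

include hn hmap hsym in
theorem apply_swap_of_length_add_three_le {w v : List ℝ} {x y : ℝ} (hv : v.length + 3 ≤ n)
    (hdvd : (n - 1) ∣ w.length + v.length + 1) (hmem : ∀ z ∈ w ++ x :: y :: v, z ∈ I) :
    g (w ++ x :: y :: v) = g (w ++ y :: x :: v) := by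
  simp only [List.forall_mem_append, List.forall_mem_cons] at hmem
  obtain ⟨hwI, hxI, hyI, hvI⟩ := hmem
  have hN_ge : n - 1 ≤ w.length + v.length + 1 := Nat.le_of_dvd (by omega) hdvd
  -- Split `w = P ++ w₂` so that `x, y` lie in the last block `w₂ ++ x :: y :: v`.
  rw [← List.take_append_drop (w.length + v.length + 3 - n) w] at hwI ⊢
  set P := w.take (w.length + v.length + 3 - n)
  set w₂ := w.drop (w.length + v.length + 3 - n)
  have hP : P ≠ [] := List.ne_nil_of_length_pos (by simp [P]; omega)
  have hP' : P.length ≡ 1 [MOD n - 1] :=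
    (Nat.modEq_one_iff_dvd_sub_one (List.length_pos_iff.mpr hP).ne').mpr (by
      simpa [P, show min (w.length + v.length + 3 - n) w.length - 1 =
        w.length + v.length + 1 - (n - 1) by omega] using Nat.dvd_sub hdvd (dvd_refl _))
  simp only [List.forall_mem_append] at hwI
  have hrest (x y : ℝ) : (w₂ ++ x :: y :: v).length = n - 1 := by simp [w₂]; omega
  simp only [List.append_assoc]
  rw [hg.apply_append_block _ _ hP hP' (hrest x y), hg.apply_append_block _ _ hP hP' (hrest y x),
    ← List.cons_append, ← List.cons_append]
  refine hg.apply_swap_of_length_eq hsym (by simp [w₂]; omega) ?_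
  simp only [List.forall_mem_append, List.forall_mem_cons]
  exact ⟨⟨hg.apply_mem hn hmap ⟨hP, hP', hwI.1⟩, hwI.2⟩, hxI, hyI, hvI⟩

include hn hmap hsym hassoc in
theorem apply_swap {w v : List ℝ} {x y : ℝ} (hlen : (w ++ x :: y :: v).length ≡ 1 [MOD n - 1])
    (hmem : ∀ z ∈ w ++ x :: y :: v, z ∈ I) : g (w ++ x :: y :: v) = g (w ++ y :: x :: v) := by
  induction hN : v.length using Nat.strong_induction_on generalizing v with
  | _ N ih =>
  have hdvd : (n - 1) ∣ w.length + v.length + 1 := by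
    simpa [Nat.add_assoc] using (Nat.modEq_one_iff_dvd_sub_one (by simp)).mp hlen
  rcases lt_or_ge v.length (n - 1) with hv | hv
  · rcases (show v.length + 2 = n ∨ v.length + 3 ≤ n by omega) with hv | hv
    · exact hg.apply_swap_of_length_add_two_eq hn hmap hsym hassoc hv hdvd hmem
    · exact hg.apply_swap_of_length_add_three_le hn hmap hsym hv hdvd hmem
  rw [← List.take_append_drop (v.length - (n - 1)) v] at hmem ⊢
  set v₁ := v.take (v.length - (n - 1))
  have hv₁ : v₁.length = v.length - (n - 1) := by simp [v₁]
  have hlen' (x y : ℝ) : (w ++ x :: y :: v₁).length ≡ 1 [MOD n - 1] :=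
    (Nat.modEq_one_iff_dvd_sub_one (by simp)).mpr (by
      simpa [hv₁, Nat.add_assoc, show w.length + (v.length - (n - 1) + 1) =
        w.length + v.length + 1 - (n - 1) by omega] using Nat.dvd_sub hdvd (dvd_refl _))
  simp only [← List.append_assoc, ← List.cons_append] at hmem ⊢
  rw [hg.apply_append_block _ _ (by simp) (hlen' x y) (by simp; omega),
    hg.apply_append_block _ _ (by simp) (hlen' y x) (by simp; omega),
    ih v₁.length (by omega) (hlen' x y) (fun z hz => hmem z (List.mem_append_left _ hz)) rfl]

include hn hmap hsym hassoc in
theorem apply_append_perm {l l' : List ℝ} (hp : l.Perm l') :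
    ∀ u : List ℝ, (u ++ l).length ≡ 1 [MOD n - 1] → (∀ z ∈ u ++ l, z ∈ I) →
      g (u ++ l) = g (u ++ l') := by
  induction hp with
  | nil => exact fun _ _ _ => rfl
  | cons a _ ih =>
    intro u hlen hmem
    simpa using ih (u ++ [a]) (by simpa using hlen) (by simpa using hmem)
  | swap a b l => exact fun u hlen hmem => hg.apply_swap hn hmap hsym hassoc hlen hmem
  | trans h₁ _ ih₁ ih₂ =>
    intro u hlen hmem
    have h₁' := h₁.append_left u
    rw [ih₁ u hlen hmem,
      ih₂ u (h₁'.length_eq ▸ hlen) fun z hz => hmem z (h₁'.mem_iff.mpr hz)]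

include hn hmap hsym hassoc in
theorem apply_perm {l l' : List ℝ} (hp : l.Perm l') (hl : l.length ≡ 1 [MOD n - 1])
    (hlI : ∀ z ∈ l, z ∈ I) : g l = g l' :=
  hg.apply_append_perm hn hmap hsym hassoc hp [] hl hlI

include hn hmap hsym hassoc in
theorem apply_append_comm {A B : List ℝ} (hAB : (A ++ B).length ≡ 1 [MOD n - 1])
    (hA : ∀ z ∈ A, z ∈ I) (hB : ∀ z ∈ B, z ∈ I) : g (A ++ B) = g (B ++ A) :=
  hg.apply_perm hn hmap hsym hassoc List.perm_append_comm hAB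
    (List.forall_mem_append.mpr ⟨hA, hB⟩)

include hn hI hmap hcont hcanc hassoc in
theorem apply_append_lt_apply_append {X P Y : List ℝ} (hX : IsAdmissible n I X)
    (hP : IsAdmissible n I P) (hY : (n - 1) ∣ Y.length) (hYI : ∀ z ∈ Y, z ∈ I)
    (hlt : g X < g P) : g (X ++ Y) < g (P ++ Y) := by
  rw [hg.apply_append_of_dvd hX.ne_nil hX.length_modEq hY,
    hg.apply_append_of_dvd hP.ne_nil hP.length_modEq hY]
  exact hg.strictMonoOn_apply_cons hn hI hmap hcont hcanc hassoc hY hYI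
    (hg.apply_mem hn hmap hX) (hg.apply_mem hn hmap hP) hlt

include hn hI hmap hcont hcanc hassoc in
theorem apply_append_le_apply_append {X P Y : List ℝ} (hX : IsAdmissible n I X)
    (hP : IsAdmissible n I P) (hY : (n - 1) ∣ Y.length) (hYI : ∀ z ∈ Y, z ∈ I)
    (hle : g X ≤ g P) : g (X ++ Y) ≤ g (P ++ Y) := by
  rcases hle.lt_or_eq with hlt | heq
  · exact (hg.apply_append_lt_apply_append hn hI hmap hcont hcanc hassoc hX hP hY hYI hlt).le
  · rw [hg.apply_append_of_dvd hX.ne_nil hX.length_modEq hY,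
      hg.apply_append_of_dvd hP.ne_nil hP.length_modEq hY, heq]

include hn hI hmap hcont hsym hcanc hassoc in
theorem apply_flatten_replicate_append_le {X P : List ℝ} (hX : IsAdmissible n I X)
    (hP : IsAdmissible n I P) (hle : g X ≤ g P) (j : ℕ) {R : List ℝ}
    (hR : j + R.length ≡ 1 [MOD n - 1]) (hRI : ∀ z ∈ R, z ∈ I) :
    g ((replicate j X).flatten ++ R) ≤ g ((replicate j P).flatten ++ R) := by
  induction j generalizing R with
  | zero => rfl
  | succ j ih =>
    have hjR : j + R.length ≡ 0 [MOD n - 1] :=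
      Nat.ModEq.add_right_cancel' 1 (by rwa [Nat.add_right_comm] at hR)
    have hY {Z : List ℝ} (hZ : IsAdmissible n I Z) :
        (n - 1) ∣ ((replicate j Z).flatten ++ R).length :=
      Nat.modEq_zero_iff_dvd.mp (List.length_flatten_replicate_append_modEq hZ.length_modEq hjR)
    have hYI {Z : List ℝ} (hZ : IsAdmissible n I Z) :
        ∀ z ∈ (replicate j Z).flatten ++ R, z ∈ I :=
      List.forall_mem_append.mpr ⟨List.forall_mem_flatten_replicate hZ.forall_mem j, hRI⟩
    have hcomm {Z : List ℝ} (hZ : IsAdmissible n I Z) :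
        g (P ++ ((replicate j Z).flatten ++ R)) = g ((replicate j Z).flatten ++ (R ++ P)) := by
      rw [hg.apply_append_comm hn hmap hsym hassoc
        (List.length_append_modEq_one hP.length_modEq (hY hZ)) hP.forall_mem (hYI hZ),
        List.append_assoc]
    simp only [List.replicate_succ, List.flatten_cons, List.append_assoc]
    calc g (X ++ ((replicate j X).flatten ++ R))
        ≤ g (P ++ ((replicate j X).flatten ++ R)) :=
          hg.apply_append_le_apply_append hn hI hmap hcont hcanc hassoc hX hP (hY hX) (hYI hX) hle
      _ = g ((replicate j X).flatten ++ (R ++ P)) := hcomm hX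
      _ ≤ g ((replicate j P).flatten ++ (R ++ P)) :=
          ih (by simpa [Nat.add_assoc] using hjR.add hP.length_modEq)
            (List.forall_mem_append.mpr ⟨hRI, hP.forall_mem⟩)
      _ = g (P ++ ((replicate j P).flatten ++ R)) := (hcomm hP).symm

include hn hI hmap hcont hsym hcanc hassoc in
theorem apply_flatten_replicate_append_lt {X P : List ℝ} (hX : IsAdmissible n I X)
    (hP : IsAdmissible n I P) (hlt : g X < g P) {j : ℕ} (hj : j ≠ 0) {R : List ℝ}
    (hR : j + R.length ≡ 1 [MOD n - 1]) (hRI : ∀ z ∈ R, z ∈ I) :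
    g ((replicate j X).flatten ++ R) < g ((replicate j P).flatten ++ R) := by
  obtain ⟨i, rfl⟩ := Nat.exists_eq_add_one_of_ne_zero hj
  have hiR : i + R.length ≡ 0 [MOD n - 1] :=
    Nat.ModEq.add_right_cancel' 1 (by rwa [Nat.add_right_comm] at hR)
  have hY {Z : List ℝ} (hZ : IsAdmissible n I Z) :
      (n - 1) ∣ ((replicate i Z).flatten ++ R).length :=
    Nat.modEq_zero_iff_dvd.mp (List.length_flatten_replicate_append_modEq hZ.length_modEq hiR)
  have hYI {Z : List ℝ} (hZ : IsAdmissible n I Z) : ∀ z ∈ (replicate i Z).flatten ++ R, z ∈ I :=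
    List.forall_mem_append.mpr ⟨List.forall_mem_flatten_replicate hZ.forall_mem i, hRI⟩
  have hcomm {Z : List ℝ} (hZ : IsAdmissible n I Z) :
      g (P ++ ((replicate i Z).flatten ++ R)) = g ((replicate i Z).flatten ++ (R ++ P)) := by
    rw [hg.apply_append_comm hn hmap hsym hassoc
      (List.length_append_modEq_one hP.length_modEq (hY hZ)) hP.forall_mem (hYI hZ),
      List.append_assoc]
  simp only [List.replicate_succ, List.flatten_cons, List.append_assoc]
  calc g (X ++ ((replicate i X).flatten ++ R))
      < g (P ++ ((replicate i X).flatten ++ R)) :=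
        hg.apply_append_lt_apply_append hn hI hmap hcont hcanc hassoc hX hP (hY hX) (hYI hX) hlt
    _ = g ((replicate i X).flatten ++ (R ++ P)) := hcomm hX
    _ ≤ g ((replicate i P).flatten ++ (R ++ P)) :=
        hg.apply_flatten_replicate_append_le hn hI hmap hcont hsym hcanc hassoc hX hP hlt.le i
          (by simpa [Nat.add_assoc] using hiR.add hP.length_modEq)
          (List.forall_mem_append.mpr ⟨hRI, hP.forall_mem⟩)
    _ = g (P ++ ((replicate i P).flatten ++ R)) := (hcomm hP).symm

include hn hmap hsym hassoc in
theorem apply_flatten_replicate_append_replicate {c x : ℝ} (hc : c ∈ I) (hx : x ∈ I) {k q : ℕ}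
    (hk1 : k ≡ 1 [MOD n - 1]) (hq : q ≡ 0 [MOD n - 1]) {M s : ℕ}
    (hMs : M + s ≡ 1 [MOD n - 1]) :
    g ((replicate M (replicate k x ++ replicate q c)).flatten ++ replicate s c) =
      g (replicate (M * k) x ++ replicate (M * q + s) c) :=
  hg.apply_perm hn hmap hsym hassoc (List.flatten_replicate_append_replicate_perm ..)
    (List.length_flatten_replicate_append_modEq (by simpa using hk1.add hq) (by simpa using hMs))
    (List.forall_mem_append.mpr ⟨List.forall_mem_flatten_replicate
      (List.forall_mem_replicate_append_replicate hx hc k q) M, by simp [hc]⟩)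

section Powers

variable {c x : ℝ} (hc : c ∈ I) (hx : x ∈ I) {k p q : ℕ} (hk : k ≠ 0) (hp : p ≠ 0)
  (hk1 : k ≡ 1 [MOD n - 1]) (hp1 : p ≡ 1 [MOD n - 1]) (hq : q ≡ 0 [MOD n - 1])
include hn hI hmap hcont hsym hcanc hassoc hc hx hk hp hk1 hp1 hq

theorem apply_replicate_append_eq_of_eq
    (hE : g (replicate k x ++ replicate q c) = g (replicate p c)) {M s : ℕ}
    (hMs : M + s ≡ 1 [MOD n - 1]) :
    g (replicate (M * k) x ++ replicate (M * q + s) c) = g (replicate (M * p + s) c) := by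
  have hX := IsAdmissible.replicate_append_replicate hx hc hk hk1 hq
  have hP := IsAdmissible.replicate (n := n) hc hp hp1
  have hR : ∀ z ∈ replicate s c, z ∈ I := by simp [hc]
  have hMs' : M + (replicate s c).length ≡ 1 [MOD n - 1] := by simpa using hMs
  rw [← hg.apply_flatten_replicate_append_replicate hn hmap hsym hassoc hc hx hk1 hq hMs,
    ← List.flatten_replicate_replicate_append_replicate]
  exact le_antisymm
    (hg.apply_flatten_replicate_append_le hn hI hmap hcont hsym hcanc hassoc hX hP hE.le M hMs' hR)
    (hg.apply_flatten_replicate_append_le hn hI hmap hcont hsym hcanc hassoc hP hX hE.ge M hMs' hR)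

theorem apply_replicate_append_lt_of_lt
    (hlt : g (replicate k x ++ replicate q c) < g (replicate p c)) {M s : ℕ} (hM : M ≠ 0)
    (hMs : M + s ≡ 1 [MOD n - 1]) :
    g (replicate (M * k) x ++ replicate (M * q + s) c) < g (replicate (M * p + s) c) := by
  rw [← hg.apply_flatten_replicate_append_replicate hn hmap hsym hassoc hc hx hk1 hq hMs,
    ← List.flatten_replicate_replicate_append_replicate]
  exact hg.apply_flatten_replicate_append_lt hn hI hmap hcont hsym hcanc hassoc
    (IsAdmissible.replicate_append_replicate hx hc hk hk1 hq) (IsAdmissible.replicate hc hp hp1)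
    hlt hM (by simpa using hMs) (by simp [hc])

variable (hcn : c < g (replicate n c))
  (hE : g (replicate k x ++ replicate q c) = g (replicate p c))
include hcn hE

theorem lt_of_mem_SxSet {r : ℝ} (hr : r ∈ SxSet n g c x) : ((p : ℝ) - q) / k < r := by
  obtain ⟨k', p', q', hk', hp', hk'1, hp'1, hq', rfl, hlt⟩ := hr
  replace hk'1 : k' ≡ 1 [MOD n - 1] := hk'1
  replace hp'1 : p' ≡ 1 [MOD n - 1] := hp'1
  replace hq' : q' ≡ 0 [MOD n - 1] := hq'
  -- Both sides below are `g` of `x^(k k') c^(k' q + q' k)`.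
  have h₁ := hg.apply_replicate_append_eq_of_eq hn hI hmap hcont hsym hcanc hassoc hc hx hk hp
    hk1 hp1 hq hE (M := k') (s := q' * k) (by simpa using hk'1.add (hq'.mul_right k))
  have h₂ := hg.apply_replicate_append_lt_of_lt hn hI hmap hcont hsym hcanc hassoc hc hx
    (by omega) (by omega) hk'1 hp'1 hq' hlt (M := k) (s := q * k') hk
    (by simpa using hk1.add (hq.mul_right k'))
  rw [Nat.mul_comm k k', show k * q' + q * k' = k' * q + q' * k by ring, h₁,
    hg.apply_replicate_lt_apply_replicate_iff hn hI hmap hcont hcanc hassoc hc hcn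
      (by positivity) (by positivity) (by simpa using (hk'1.mul hp1).add (hq'.mul_right k))
      (by simpa using (hk1.mul hp'1).add (hq.mul_right k'))] at h₂
  have h₂' : (k' * p + q' * k : ℝ) < k * p' + q * k' := by exact_mod_cast h₂
  rw [div_lt_div_iff₀ (by positivity) (by positivity)]
  linarith

theorem mem_SxSet (j : ℕ) :
    (((p * (j * (n - 1) + 1) + (n - 1) : ℕ) : ℝ) - (q * (j * (n - 1) + 1) : ℕ)) /
      (k * (j * (n - 1) + 1) : ℕ) ∈ SxSet n g c x := by
  set M := j * (n - 1) + 1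
  have hM1 : M ≡ 1 [MOD n - 1] := by
    have := (Nat.modEq_zero_iff_dvd.mpr (dvd_mul_left (n - 1) j)).add_right 1
    rwa [Nat.zero_add] at this
  have hkM : k * M ≡ 1 [MOD n - 1] := by simpa using hk1.mul hM1
  have hpM : p * M + (n - 1) ≡ 1 [MOD n - 1] := by
    simpa using (hp1.mul hM1).add (Nat.modEq_zero_iff_dvd.mpr dvd_rfl)
  have hqM : q * M ≡ 0 [MOD n - 1] := by simpa using hq.mul_right M
  refine ⟨k * M, p * M + (n - 1), q * M, Nat.one_le_iff_ne_zero.mpr (by positivity), by omega,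
    hkM, hpM, hqM, rfl, ?_⟩
  have h := hg.apply_replicate_append_eq_of_eq hn hI hmap hcont hsym hcanc hassoc hc hx hk hp
    hk1 hp1 hq hE (M := M) (s := 0) (by simpa using hM1)
  rw [Nat.mul_comm k, Nat.mul_comm q, ← Nat.add_zero (M * q), h, Nat.add_zero, Nat.mul_comm M,
    hg.apply_replicate_lt_apply_replicate_iff hn hI hmap hcont hcanc hassoc hc hcn
      (by positivity) (by omega) (by simpa using hp1.mul hM1) hpM]
  omega

theorem sInf_SxSet_eq : sInf (SxSet n g c x) = ((p : ℝ) - q) / k := by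
  refine csInf_eq_of_forall_ge_of_forall_gt_exists_lt
    ⟨_, hg.mem_SxSet hn hI hmap hcont hsym hcanc hassoc hc hx hk hp hk1 hp1 hq hcn hE 0⟩
    (fun r hr => (hg.lt_of_mem_SxSet hn hI hmap hcont hsym hcanc hassoc hc hx hk hp hk1 hp1
      hq hcn hE hr).le) fun w hw => ?_
  obtain ⟨j, hj⟩ := exists_nat_one_div_lt (sub_pos.mpr hw)
  refine ⟨_, hg.mem_SxSet hn hI hmap hcont hsym hcanc hassoc hc hx hk hp hk1 hp1 hq hcn hE
    (j + 1), ?_⟩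
  set m := n - 1
  have hm : (1 : ℝ) ≤ m := by exact_mod_cast (show 1 ≤ m by omega)
  have hk₁ : (1 : ℝ) ≤ k := by exact_mod_cast Nat.one_le_iff_ne_zero.mpr hk
  have hgap : (m : ℝ) / (k * ((j + 1) * m + 1)) < 1 / (j + 1) := by
    rw [div_lt_div_iff₀ (by positivity) (by positivity)]
    nlinarith [mul_nonneg (sub_nonneg.mpr hk₁) (by positivity : (0 : ℝ) ≤ (j + 1) * m + 1)]
  have hval : (((p * ((j + 1) * m + 1) + m : ℕ) : ℝ) - (q * ((j + 1) * m + 1) : ℕ)) /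
      (k * ((j + 1) * m + 1) : ℕ) = (p - q) / k + m / (k * ((j + 1) * m + 1)) := by
    push_cast
    field_simp
    ring
  rw [hval]
  linarith

end Powers

end IsNAryExtension

theorem stmt_17_general (n : ℕ) (hn : 2 ≤ n) (I : Set ℝ) (hI : I.OrdConnected)
    (f : (Fin n → ℝ) → ℝ)
    (hmap : ∀ x : Fin n → ℝ, (∀ i, x i ∈ I) → f x ∈ I)
    (hcont : ContinuousOn f {x | ∀ i, x i ∈ I})
    (hsym : SymmOn n I f) (hcanc : CancOn n I f) (hassoc : NAssocOn n I f)
    (g : List ℝ → ℝ)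
    -- g is the n-associative extension of f with g₁ = id:
    (hg1 : ∀ a : ℝ, g [a] = a)
    (hgn : ∀ l : List ℝ, l.length = n → g l = f (fun i : Fin n => l.getD (i : ℕ) 0))
    (hgrec : ∀ l r : List ℝ, l ≠ [] → l.length % (n - 1) = 1 % (n - 1) →
      r.length = n - 1 → g (l ++ r) = g (g l :: r))
    (c : ℝ) (hc : c ∈ I) (hcf : c < f (fun _ => c))
    :
    (∀ x ∈ I, ∀ k p q : ℕ,
      1 ≤ k → 1 ≤ p → k % (n - 1) = 1 % (n - 1) → p % (n - 1) = 1 % (n - 1) →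
      q % (n - 1) = 0 →
      g (List.replicate k x ++ List.replicate q c) = g (List.replicate p c) →
      sInf (SxSet n g c x) = ((p : ℝ) - (q : ℝ)) / (k : ℝ)) ∧
    sInf (SxSet n g c c) = 1 := by
  have hg : IsNAryExtension n f g := ⟨hg1, hgn, hgrec⟩
  have hcn : c < g (replicate n c) := by
    rw [hg.apply_of_length_eq _ (List.length_replicate ..)]
    convert hcf using 3 with i
    exact List.getD_replicate _ i.isLt
  have hsInf (x : ℝ) (hx : x ∈ I) (k p q : ℕ) (hk : 1 ≤ k) (hp : 1 ≤ p)
      (hk1 : k ≡ 1 [MOD n - 1]) (hp1 : p ≡ 1 [MOD n - 1]) (hq : q ≡ 0 [MOD n - 1])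
      (hE : g (replicate k x ++ replicate q c) = g (replicate p c)) :
      sInf (SxSet n g c x) = ((p : ℝ) - q) / k :=
    hg.sInf_SxSet_eq hn hI hmap hcont hsym hcanc hassoc hc hx (by omega) (by omega) hk1 hp1 hq hcn
      hE
  exact ⟨hsInf, by simpa using hsInf c hc 1 1 0 le_rfl le_rfl rfl rfl rfl rfl⟩

/-- Claim 8: with `φ(x) = inf S_x`, if `g(c^p) = g(x^k c^q)` for some
`k, p, q+1 ∈ Aₙ`, then `φ(x) = (p-q)/k`; in particular `φ(c) = 1`. -/
theorem stmt_17 (n : ℕ) (hn : 2 ≤ n) (I : Set ℝ) (hI : I.OrdConnected)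
    (hne : ∃ a ∈ I, ∃ b ∈ I, a ≠ b)
    (f : (Fin n → ℝ) → ℝ)
    (hmap : ∀ x : Fin n → ℝ, (∀ i, x i ∈ I) → f x ∈ I)
    (hcont : ContinuousOn f {x | ∀ i, x i ∈ I})
    (hsym : SymmOn n I f) (hcanc : CancOn n I f) (hassoc : NAssocOn n I f)
    (g : List ℝ → ℝ)
    -- g is the n-associative extension of f with g₁ = id:
    (hg1 : ∀ a : ℝ, g [a] = a)
    (hgn : ∀ l : List ℝ, l.length = n → g l = f (fun i : Fin n => l.getD (i : ℕ) 0))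
    (hgrec : ∀ l r : List ℝ, l ≠ [] → l.length % (n - 1) = 1 % (n - 1) →
      r.length = n - 1 → g (l ++ r) = g (g l :: r))
    (c : ℝ) (hc : c ∈ I) (hcf : c < f (fun _ => c))
    :
    (∀ x ∈ I, ∀ k p q : ℕ,
      1 ≤ k → 1 ≤ p → k % (n - 1) = 1 % (n - 1) → p % (n - 1) = 1 % (n - 1) →
      q % (n - 1) = 0 →
      g (List.replicate k x ++ List.replicate q c) = g (List.replicate p c) →
      sInf (SxSet n g c x) = ((p : ℝ) - (q : ℝ)) / (k : ℝ)) ∧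
    sInf (SxSet n g c c) = 1 :=
  stmt_17_general n hn I hI f hmap hcont hsym hcanc hassoc g hg1 hgn hgrec c hc hcf
end

section
/- Main Theorem (sufficiency direction): Let J be a real interval of one of the forms (-∞,b), (-∞,b], (a,∞), [a,∞), or ℝ with b ≤ 0 ≤ a, and let φ : I → J be a continuous strictly monotonic bijection. Then f : Iⁿ → I defined by f(x₁,…,xₙ) = φ⁻¹(Σᵢ φ(xᵢ)) is continuous, symmetric, cancellative, and associative. -/
/-- `J` is a real interval of one of the forms `(-∞,b)`, `(-∞,b]`, `(a,∞)`, `[a,∞)`,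
or `ℝ`, with `b ≤ 0 ≤ a`. -/
def JForm (J : Set ℝ) : Prop :=
  (∃ b : ℝ, b ≤ 0 ∧ (J = Set.Iio b ∨ J = Set.Iic b)) ∨
  (∃ a : ℝ, 0 ≤ a ∧ (J = Set.Ioi a ∨ J = Set.Ici a)) ∨
  J = Set.univ

/-!
On `Iⁿ` the map `φ` turns `f` into plain addition, `φ (f x) = ∑ φ (xᵢ)`, and `φ` is injective on
`I`. Symmetry, cancellativity and associativity of `f` are therefore those of addition, pulled
back through `φ`. For continuity, a continuous strictly monotone map on an interval has an interval
as image and is thus a topological embedding, so `f` is continuous because `φ ∘ f` is.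
-/

open Finset Set Topology

section Embedding

variable {α β X : Type*} [ConditionallyCompleteLinearOrder α] [DenselyOrdered α]
  [TopologicalSpace α] [OrderTopology α] [LinearOrder β] [TopologicalSpace β] [OrderTopology β]
  [TopologicalSpace X] {I : Set α} {φ : α → β}

theorem StrictMonoOn.isEmbedding_domRestrict (hI : I.OrdConnected) (hφ : StrictMonoOn φ I)
    (hφc : ContinuousOn φ I) : IsEmbedding (I.domRestrict φ) := by
  have := hI -- the order topology on `↥I` is an instance only for order-connected `I`
  refine StrictMono.isEmbedding_of_ordConnected (fun a b hab => hφ a.2 b.2 hab) ?_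
  rw [range_domRestrict]
  exact (hI.isPreconnected.image φ hφc).ordConnected

theorem StrictMonoOn.continuousOn_of_comp (hI : I.OrdConnected) (hφ : StrictMonoOn φ I)
    (hφc : ContinuousOn φ I) {h : X → α} {s : Set X} (hs : MapsTo h s I)
    (hc : ContinuousOn (φ ∘ h) s) : ContinuousOn h s := by
  rw [continuousOn_iff_continuous_domRestrict] at hc ⊢
  have : Continuous (hs.restrict h s I) :=
    (hφ.isEmbedding_domRestrict hI hφc).continuous_iff.mpr hc
  exact continuous_subtype_val.comp this

theorem StrictAntiOn.continuousOn_of_comp (hI : I.OrdConnected) (hφ : StrictAntiOn φ I)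
    (hφc : ContinuousOn φ I) {h : X → α} {s : Set X} (hs : MapsTo h s I)
    (hc : ContinuousOn (φ ∘ h) s) : ContinuousOn h s :=
  StrictMonoOn.continuousOn_of_comp (β := βᵒᵈ) hI hφ hφc hs hc

end Embedding

theorem Fintype.apply_eq_of_sum_eq {ι M : Type*} [Fintype ι] [AddCancelCommMonoid M]
    {a b : ι → M} (k : ι) (hsum : ∑ i, a i = ∑ i, b i) (hne : ∀ i, i ≠ k → a i = b i) :
    a k = b k := by
  classical
  have hrest : ∑ i ∈ univ.erase k, a i = ∑ i ∈ univ.erase k, b i :=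
    Finset.sum_congr rfl fun i hi => hne i (ne_of_mem_erase hi)
  rw [← add_sum_erase _ a (mem_univ k), ← add_sum_erase _ b (mem_univ k), hrest] at hsum
  exact add_right_cancel hsum

/-- The arguments of the outer `f` in `NAssocOn`: `x` with its block `x k, …, x (k+n-1)`
collapsed to the single entry `y`. -/
def collapseBlock {α : Type*} (x : ℕ → α) (n k : ℕ) (y : α) (j : ℕ) : α :=
  if j < k then x j else if j = k then y else x (j + n - 1)

theorem sum_range_collapseBlock {α M : Type*} [AddCommMonoid M] (g : α → M) (x : ℕ → α)
    {n k : ℕ} (hk : k < n) (y : α) :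
    ∑ j ∈ range n, g (collapseBlock x n k y j) =
      ∑ j ∈ range k, g (x j) + g y + ∑ j ∈ range (n - 1 - k), g (x (k + n + j)) := by
  obtain ⟨r, rfl⟩ := Nat.exists_eq_add_of_lt hk
  rw [show k + r + 1 - 1 - k = r by omega, add_assoc k, sum_range_add, sum_range_succ']
  have hhead : ∑ j ∈ range k, g (collapseBlock x (k + (r + 1)) k y j) = ∑ j ∈ range k, g (x j) :=
    Finset.sum_congr rfl fun j hj => by rw [collapseBlock, if_pos (mem_range.1 hj)]
  have htail : ∑ j ∈ range r, g (collapseBlock x (k + (r + 1)) k y (k + (j + 1))) =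
      ∑ j ∈ range r, g (x (k + (k + (r + 1)) + j)) :=
    Finset.sum_congr rfl fun j _ => by
      rw [collapseBlock, if_neg (by omega), if_neg (by omega)]
      congr 2
      omega
  have hmid : collapseBlock x (k + (r + 1)) k y (k + 0) = y := by simp [collapseBlock]
  rw [hhead, htail, hmid, add_comm (∑ j ∈ range r, _), add_assoc]

theorem sum_range_two_mul_sub_one {M : Type*} [AddCommMonoid M] (a : ℕ → M) {n k : ℕ}
    (hk : k < n) :
    ∑ m ∈ range (2 * n - 1), a m =
      ∑ j ∈ range k, a j + ∑ l ∈ range n, a (k + l) + ∑ j ∈ range (n - 1 - k), a (k + n + j) := by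
  rw [show 2 * n - 1 = k + n + (n - 1 - k) by omega, sum_range_add, sum_range_add]

/-- `f` is the quasi-sum `φ⁻¹ (∑ φ (xᵢ))` generated by `φ` on `Iⁿ`. -/
def IsQuasiSumOn (n : ℕ) (I : Set ℝ) (φ : ℝ → ℝ) (f : (Fin n → ℝ) → ℝ) : Prop :=
  ∀ x : Fin n → ℝ, (∀ i, x i ∈ I) → f x ∈ I ∧ φ (f x) = ∑ i : Fin n, φ (x i)

namespace IsQuasiSumOn

variable {n : ℕ} {I : Set ℝ} {φ : ℝ → ℝ} {f : (Fin n → ℝ) → ℝ}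

theorem symmOn (hf : IsQuasiSumOn n I φ f) (hφ : I.InjOn φ) : SymmOn n I f := by
  intro x hx σ
  obtain ⟨hσI, hσsum⟩ := hf (x ∘ σ) fun i => hx (σ i)
  obtain ⟨hxI, hxsum⟩ := hf x hx
  refine hφ hσI hxI ?_
  rw [hσsum, hxsum]
  exact Equiv.sum_comp σ fun i => φ (x i)

theorem cancOn (hf : IsQuasiSumOn n I φ f) (hφ : I.InjOn φ) : CancOn n I f := by
  intro k x x' hx hx' hagree hfx
  refine hφ (hx k) (hx' k) (Fintype.apply_eq_of_sum_eq k ?_ fun i hi => congrArg φ (hagree i hi))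
  rw [← (hf x hx).2, ← (hf x' hx').2, hfx]

theorem apply_collapseBlock (hf : IsQuasiSumOn n I φ f) {x : ℕ → ℝ}
    (hx : ∀ j, j < 2 * n - 1 → x j ∈ I) {k : ℕ} (hk : k < n) :
    f (fun j : Fin n => collapseBlock x n k (f fun l : Fin n => x (k + l)) j) ∈ I ∧
      φ (f fun j : Fin n => collapseBlock x n k (f fun l : Fin n => x (k + l)) j) =
        ∑ m ∈ range (2 * n - 1), φ (x m) := by
  obtain ⟨hyI, hy⟩ := hf (fun l : Fin n => x (k + l)) fun l => hx _ (by omega)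
  have hmem : ∀ j : Fin n, collapseBlock x n k (f fun l : Fin n => x (k + l)) j ∈ I := by
    intro j
    unfold collapseBlock
    split_ifs
    · exact hx _ (by omega)
    · exact hyI
    · exact hx _ (by omega)
  obtain ⟨hfI, hfsum⟩ := hf _ hmem
  refine ⟨hfI, ?_⟩
  rw [hfsum, Fin.sum_univ_eq_sum_range (fun j => φ (collapseBlock x n k _ j)),
    sum_range_collapseBlock φ x hk, hy, Fin.sum_univ_eq_sum_range (fun l => φ (x (k + l))),
    sum_range_two_mul_sub_one _ hk]

theorem nAssocOn (hf : IsQuasiSumOn n I φ f) (hφ : I.InjOn φ) : NAssocOn n I f := by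
  intro x hx i hi
  obtain ⟨hleftI, hleft⟩ := hf.apply_collapseBlock hx (by omega : i < n)
  obtain ⟨hrightI, hright⟩ := hf.apply_collapseBlock hx hi
  exact hφ hleftI hrightI (hleft.trans hright.symm)

theorem continuousOn (hf : IsQuasiSumOn n I φ f) (hI : I.OrdConnected)
    (hmono : StrictMonoOn φ I ∨ StrictAntiOn φ I) (hφc : ContinuousOn φ I) :
    ContinuousOn f {x | ∀ i, x i ∈ I} := by
  have hmaps : MapsTo f {x | ∀ i, x i ∈ I} I := fun x hx => (hf x hx).1
  have hsum : ContinuousOn (fun x : Fin n → ℝ => ∑ i, φ (x i)) {x | ∀ i, x i ∈ I} :=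
    continuousOn_finsetSum _ fun i _ =>
      hφc.comp (continuous_apply i).continuousOn fun _ (hx : ∀ i, _ ∈ I) => hx i
  have hφf : ContinuousOn (φ ∘ f) {x | ∀ i, x i ∈ I} := hsum.congr fun x hx => (hf x hx).2
  rcases hmono with hφ | hφ
  · exact hφ.continuousOn_of_comp hI hφc hmaps hφf
  · exact hφ.continuousOn_of_comp hI hφc hmaps hφf

end IsQuasiSumOn

theorem stmt_18_general (n : ℕ) (I : Set ℝ) (hI : I.OrdConnected)
    (φ : ℝ → ℝ) (hmono : StrictMonoOn φ I ∨ StrictAntiOn φ I)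
    (hφcont : ContinuousOn φ I)
    (f : (Fin n → ℝ) → ℝ)
    -- f(x) = φ⁻¹(∑ φ(xᵢ)) on Iⁿ, i.e. f x ∈ I and φ(f x) = ∑ φ(xᵢ):
    (hf : ∀ x : Fin n → ℝ, (∀ i, x i ∈ I) →
      f x ∈ I ∧ φ (f x) = ∑ i : Fin n, φ (x i)) :
    ContinuousOn f {x | ∀ i, x i ∈ I} ∧ SymmOn n I f ∧ CancOn n I f ∧
      NAssocOn n I f := by
  have hf : IsQuasiSumOn n I φ f := hf
  have hinj : I.InjOn φ := hmono.elim StrictMonoOn.injOn StrictAntiOn.injOn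
  exact ⟨hf.continuousOn hI hmono hφcont, hf.symmOn hinj, hf.cancOn hinj, hf.nAssocOn hinj⟩

/-- Main Theorem, sufficiency: if `φ : I → J` is a continuous strictly monotonic
bijection onto an interval `J` of one of the admissible forms, then
`f(x₁,…,xₙ) = φ⁻¹(∑ φ(xᵢ))` is continuous, symmetric, cancellative and associative. -/
theorem stmt_18 (n : ℕ) (hn : 2 ≤ n) (I : Set ℝ) (hI : I.OrdConnected)
    (hne : ∃ a ∈ I, ∃ b ∈ I, a ≠ b)
    (J : Set ℝ) (hJ : JForm J)
    (φ : ℝ → ℝ) (hmono : StrictMonoOn φ I ∨ StrictAntiOn φ I)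
    (hφcont : ContinuousOn φ I) (hbij : φ '' I = J)
    (f : (Fin n → ℝ) → ℝ)
    -- f(x) = φ⁻¹(∑ φ(xᵢ)) on Iⁿ, i.e. f x ∈ I and φ(f x) = ∑ φ(xᵢ):
    (hf : ∀ x : Fin n → ℝ, (∀ i, x i ∈ I) →
      f x ∈ I ∧ φ (f x) = ∑ i : Fin n, φ (x i)) :
    ContinuousOn f {x | ∀ i, x i ∈ I} ∧ SymmOn n I f ∧ CancOn n I f ∧
      NAssocOn n I f :=
  stmt_18_general n I hI φ hmono hφcont f hf
end
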